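/- arXiv:1801.08231 — 5 statements merged into one kernel-verified Lean document; each statement's English description precedes it below -/
import Mathlib

section
/- Let id be the n-rook with id(i) = i for all i and let w₀ be the n-rook with w₀(i) = n+1−i for all i. Then for every 2n-rook x, the relations ι(id) ≤ x ≤ ι(w₀) hold in the Bruhat–Chevalley–Renner order on 2n-rooks if and only if x = ι(w) for some permutation w of {1,…,n} (an n-rook with all values nonzero); consequently the interval [ι(id), ι(w₀)] in the poset of 2n-rooks is order-isomorphic to the symmetric group S_n equipped with the restriction of the Bruhat–Chevalley–Renner order (the Bruhat order). -/
open scoped Classical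

/-- An `n`-rook in one-line notation: a function `a : Fin n → ℕ` (position `i`
represents position `i+1` in 1-based notation) with values in `{0,…,n}`, whose
nonzero values are pairwise distinct. `a i = 0` means position `i` is vacant. -/
def IsRook (n : ℕ) (a : Fin n → ℕ) : Prop :=
  (∀ i, a i ≤ n) ∧ ∀ i j, a i ≠ 0 → a i = a j → i = j

/-- The rank of a rook: the number of nonzero entries. -/
def rookRank (n : ℕ) (a : Fin n → ℕ) : ℕ :=
  (Finset.univ.filter (fun i => a i ≠ 0)).card

/-- `inv(a) = #{(i,j) : i < j ∧ a i > a j}`. -/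
def rookInv (n : ℕ) (a : Fin n → ℕ) : ℕ :=
  (Finset.univ.filter (fun p : Fin n × Fin n => p.1 < p.2 ∧ a p.2 < a p.1)).card

/-- `coinv(a) = #{(i,j) : i < j ∧ 0 < a i < a j}`. -/
def rookCoinv (n : ℕ) (a : Fin n → ℕ) : ℕ :=
  (Finset.univ.filter (fun p : Fin n × Fin n => p.1 < p.2 ∧ 0 < a p.1 ∧ a p.1 < a p.2)).card

/-- The length `ℓ(a) = Σ a i + inv(a)`. -/
def rookLen (n : ℕ) (a : Fin n → ℕ) : ℕ :=
  (∑ i, a i) + rookInv n a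
/-- The generating relations of the Bruhat–Chevalley–Renner order on `n`-rooks. -/
def BCRStep (n : ℕ) (a b : Fin n → ℕ) : Prop :=
  IsRook n a ∧ IsRook n b ∧
  ((∃ i, a i < b i ∧ ∀ j, j ≠ i → a j = b j) ∨
   (∃ i j : Fin n, i < j ∧ b i = a j ∧ b j = a i ∧ b j < b i ∧
      ∀ m, m ≠ i → m ≠ j → a m = b m))

/-- The Bruhat–Chevalley–Renner order: the partial order on `n`-rooks generated by
the relations `BCRStep`. -/
def BCRle (n : ℕ) : (Fin n → ℕ) → (Fin n → ℕ) → Prop :=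
  Relation.ReflTransGen (BCRStep n)

/-- The map `ι` sending an `n`-rook `σ` to the `2n`-rook which is `0` on the
first `n` positions and `σ` on the last `n` positions. -/
def iota (n : ℕ) (σ : Fin n → ℕ) : Fin (2 * n) → ℕ :=
  fun i => if h : n ≤ (i : ℕ) then σ ⟨(i : ℕ) - n, by have := i.isLt; omega⟩ else 0

/-- The identity rook `id(i) = i` (0-based: `id i = i + 1`). -/
def idRook (n : ℕ) : Fin n → ℕ := fun i => i.val + 1

/-- The longest permutation `w₀`, with `w₀(i) = n+1−i` (0-based: `w₀ i = n − i`). -/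
def lastRook (n : ℕ) : Fin n → ℕ := fun i => n - i.val

/-- The `n`-rook of a permutation `w` of `{1,…,n}`: all values nonzero. -/
def permRook (n : ℕ) (w : Equiv.Perm (Fin n)) : Fin n → ℕ := fun i => (w i : ℕ) + 1

/-!
Every permutation rook lies between `id` and `w₀`: bubble sort by adjacent transpositions gives a
chain of generating relations, and `ι` maps it to a chain of `2n`-rooks. Conversely, for a
down-closed set of positions and an up-closed set of values, the number of positions of the set
carrying such values can only grow along the order. Applied three times, this forces every `x` in
`[ι(id), ι(w₀)]` to vanish on the first `n` positions, to take values `≤ n` and to have rank `n`,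
so `x = ι(w)`. Since the whole interval lies in the image of `ι` and `ι` reflects the generating
relations, every chain from `ι(σ)` to `ι(τ)` is the image of a chain from `σ` to `τ`.
-/

open Finset Relation

section Sorting

variable {n : ℕ}

lemma Fin.strictMono_of_adjacent {α : Type*} [Preorder α] {f : Fin n → α}
    (h : ∀ i j : Fin n, (i : ℕ) + 1 = j → f i < f j) : StrictMono f := by
  cases n with
  | zero => exact fun i => i.elim0
  | succ m => exact Fin.strictMono_iff_lt_succ.2 fun i => h _ _ (by simp)

lemma Equiv.Perm.eq_one_of_adjacent_lt {w : Equiv.Perm (Fin n)}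
    (h : ∀ i j : Fin n, (i : ℕ) + 1 = j → w i < w j) : w = 1 := by
  have hw := Fin.strictMono_of_adjacent h
  ext i
  exact congrArg (fun e : Fin n ≃o Fin n => (e i : ℕ))
    (Subsingleton.elim (hw.orderIsoOfSurjective w w.surjective) (OrderIso.refl _))

lemma Equiv.Perm.eq_revPerm_of_adjacent_gt {w : Equiv.Perm (Fin n)}
    (h : ∀ i j : Fin n, (i : ℕ) + 1 = j → w j < w i) : w = Fin.revPerm := by
  have : w * Fin.revPerm = 1 := Equiv.Perm.eq_one_of_adjacent_lt fun i j hij =>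
    h j.rev i.rev (by simp only [Fin.val_rev]; omega)
  rw [mul_eq_one_iff_eq_inv.1 this]
  rfl

lemma Equiv.swap_lt_swap_of_adjacent {i j p q : Fin n} (hij : (i : ℕ) + 1 = j) (hpq : p < q)
    (hne : (p, q) ≠ (i, j)) : Equiv.swap i j p < Equiv.swap i j q := by
  simp only [ne_eq, Prod.mk.injEq, Fin.ext_iff] at hne
  rw [Fin.lt_def] at hpq ⊢
  simp only [Equiv.swap_apply_def, Fin.ext_iff]
  split_ifs <;> omega

noncomputable def pairCount (r : Fin n → Fin n → Prop) (w : Equiv.Perm (Fin n)) : ℕ :=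
  #{p : Fin n × Fin n | p.1 < p.2 ∧ r (w p.1) (w p.2)}

lemma pairCount_mul_swap_lt {r : Fin n → Fin n → Prop} [Std.Asymm r]
    {w : Equiv.Perm (Fin n)} {i j : Fin n} (hij : (i : ℕ) + 1 = j) (hr : r (w i) (w j)) :
    pairCount r (w * Equiv.swap i j) < pairCount r w := by
  set s := Equiv.swap i j
  have hmem : (i, j) ∈ ({p | p.1 < p.2 ∧ r (w p.1) (w p.2)} : Finset (Fin n × Fin n)) := by
    simp only [mem_filter, mem_univ, true_and, Fin.lt_def]
    exact ⟨by omega, hr⟩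
  refine lt_of_le_of_lt ?_ (card_erase_lt_of_mem hmem)
  refine card_le_card_of_injOn (s.prodCongr s) (fun p hp => ?_) (s.prodCongr s).injective.injOn
  rw [mem_coe, mem_filter] at hp
  obtain ⟨-, hlt, hpr⟩ := hp
  have hne : p ≠ (i, j) := by
    rintro rfl
    simp only [s, Equiv.Perm.coe_mul, Function.comp_apply, Equiv.swap_apply_left,
      Equiv.swap_apply_right] at hpr
    exact Std.Asymm.asymm _ _ hr hpr
  rw [mem_coe, mem_erase, mem_filter]
  refine ⟨fun heq => ?_, mem_univ _, Equiv.swap_lt_swap_of_adjacent hij hlt hne, hpr⟩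
  have h1 : p.1 = j := by simpa [s] using congrArg (fun q => s q.1) heq
  have h2 : p.2 = i := by simpa [s] using congrArg (fun q => s q.2) heq
  rw [h1, h2, Fin.lt_def] at hlt
  omega

/-- Bubble sort: swapping an adjacent `r`-related pair lowers `pairCount r`, and `t` is the only
permutation without adjacent `r`-related pairs. -/
theorem reflTransGen_of_adjacent_swaps {R : Equiv.Perm (Fin n) → Equiv.Perm (Fin n) → Prop}
    (r : Fin n → Fin n → Prop) [Std.Asymm r] {t : Equiv.Perm (Fin n)}
    (ht : ∀ w : Equiv.Perm (Fin n), (∀ i j : Fin n, (i : ℕ) + 1 = j → ¬ r (w i) (w j)) → w = t)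
    (hR : ∀ (w : Equiv.Perm (Fin n)) (i j : Fin n), i < j → r (w i) (w j) →
      R w (w * Equiv.swap i j))
    (w : Equiv.Perm (Fin n)) : ReflTransGen R w t := by
  by_cases hw : ∀ i j : Fin n, (i : ℕ) + 1 = j → ¬ r (w i) (w j)
  · rw [ht w hw]
  · push Not at hw
    obtain ⟨i, j, hij, hr⟩ := hw
    exact .head (hR w i j (Fin.lt_def.2 (by omega)) hr)
      (reflTransGen_of_adjacent_swaps r ht hR (w * Equiv.swap i j))
termination_by pairCount r w
decreasing_by exact pairCount_mul_swap_lt hij hr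

end Sorting

section PermRook

variable {n : ℕ}

lemma isRook_permRook (w : Equiv.Perm (Fin n)) : IsRook n (permRook n w) :=
  ⟨fun i => (w i).isLt, fun i j _ h => w.injective (Fin.ext (by simpa [permRook] using h))⟩

lemma permRook_injective : Function.Injective (permRook n) := fun w w' h =>
  Equiv.ext fun i => Fin.ext (by simpa [permRook] using congrFun h i)

lemma permRook_one : permRook n 1 = idRook n := rfl

lemma permRook_revPerm : permRook n Fin.revPerm = lastRook n := by
  ext i
  simp only [permRook, Fin.revPerm_apply, Fin.val_rev, lastRook]
  omega

lemma bcrStep_permRook_mul_swap {w : Equiv.Perm (Fin n)} {i j : Fin n} (hij : i < j)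
    (hw : w i < w j) : BCRStep n (permRook n w) (permRook n (w * Equiv.swap i j)) := by
  refine ⟨isRook_permRook w, isRook_permRook _, .inr ⟨i, j, hij, ?_, ?_, ?_, fun m hmi hmj => ?_⟩⟩
  all_goals simp_all [permRook, Equiv.swap_apply_of_ne_of_ne]

theorem permRook_le_lastRook (w : Equiv.Perm (Fin n)) :
    BCRle n (permRook n w) (lastRook n) := by
  rw [← permRook_revPerm]
  refine ReflTransGen.lift (permRook n) (fun _ _ h => h) _ _
    (reflTransGen_of_adjacent_swaps (R := fun u v => BCRStep n (permRook n u) (permRook n v))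
      (· < ·) (fun u hu => ?_) (fun u i j hij hu => bcrStep_permRook_mul_swap hij hu) w)
  exact Equiv.Perm.eq_revPerm_of_adjacent_gt fun i j hij =>
    lt_of_le_of_ne (not_lt.1 (hu i j hij)) (u.injective.ne (by rintro rfl; omega))

theorem idRook_le_permRook (w : Equiv.Perm (Fin n)) :
    BCRle n (idRook n) (permRook n w) := by
  rw [← permRook_one]
  refine ReflTransGen.lift (permRook n) (fun _ _ h => h) _ _ (ReflTransGen.swap _ _
    (reflTransGen_of_adjacent_swaps (R := fun u v => BCRStep n (permRook n v) (permRook n u))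
      (fun a b => b < a) (fun u hu => ?_) (fun u i j hij hu => ?_) w))
  · exact Equiv.Perm.eq_one_of_adjacent_lt fun i j hij =>
      lt_of_le_of_ne (not_lt.1 (hu i j hij)) (u.injective.ne (by rintro rfl; omega))
  · simpa using bcrStep_permRook_mul_swap (w := u * Equiv.swap i j) hij (by simpa using hu)

end PermRook

section Iota

variable {n : ℕ} {a b : Fin n → ℕ}

def secondHalf (n : ℕ) : Fin n ↪o Fin (2 * n) :=
  OrderEmbedding.ofStrictMono (fun i => ⟨n + i, by omega⟩) fun i j h => by
    rw [Fin.lt_def] at h ⊢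
    exact Nat.add_lt_add_left h n

@[simp]
lemma val_secondHalf (i : Fin n) : (secondHalf n i : ℕ) = n + i := rfl

lemma lt_or_exists_secondHalf_eq (j : Fin (2 * n)) : (j : ℕ) < n ∨ ∃ i, secondHalf n i = j :=
  (lt_or_ge (j : ℕ) n).imp_right fun h => ⟨⟨j - n, by omega⟩, Fin.ext (by simp; omega)⟩

lemma iota_of_lt (σ : Fin n → ℕ) {j : Fin (2 * n)} (hj : (j : ℕ) < n) : iota n σ j = 0 :=
  dif_neg (by omega)

@[simp]
lemma iota_secondHalf (σ : Fin n → ℕ) (i : Fin n) : iota n σ (secondHalf n i) = σ i := by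
  rw [iota, dif_pos (by simp)]
  congr
  simp

lemma iota_apply_eq_of_forall {j : Fin (2 * n)} (h : ∀ i, secondHalf n i = j → a i = b i) :
    iota n a j = iota n b j := by
  obtain hj | ⟨i, rfl⟩ := lt_or_exists_secondHalf_eq j
  · rw [iota_of_lt a hj, iota_of_lt b hj]
  · simpa using h i rfl

lemma iota_injective : Function.Injective (iota n) := fun a b h =>
  funext fun i => by simpa using congrFun h (secondHalf n i)

lemma eq_iota_of_forall_lt {x : Fin (2 * n) → ℕ}
    (hx : ∀ j : Fin (2 * n), (j : ℕ) < n → x j = 0) : x = iota n (x ∘ secondHalf n) := by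
  funext j
  obtain hj | ⟨i, rfl⟩ := lt_or_exists_secondHalf_eq j
  · rw [hx j hj, iota_of_lt _ hj]
  · simp

lemma iota_le_of_forall_le (ha : ∀ i, a i ≤ n) (j : Fin (2 * n)) : iota n a j ≤ n := by
  obtain hj | ⟨i, rfl⟩ := lt_or_exists_secondHalf_eq j
  · simp [iota_of_lt a hj]
  · simpa using ha i

lemma isRook_iota (ha : IsRook n a) : IsRook (2 * n) (iota n a) := by
  refine ⟨fun j => (iota_le_of_forall_le ha.1 j).trans (by omega), fun j k hj hjk => ?_⟩
  obtain hj' | ⟨i, rfl⟩ := lt_or_exists_secondHalf_eq j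
  · exact absurd (iota_of_lt a hj') hj
  obtain hk | ⟨k, rfl⟩ := lt_or_exists_secondHalf_eq k
  · exact absurd (hjk.trans (iota_of_lt a hk)) hj
  simp only [iota_secondHalf] at hj hjk
  rw [ha.2 i k hj hjk]

lemma IsRook.of_iota (h : IsRook (2 * n) (iota n a)) (ha : ∀ i, a i ≤ n) : IsRook n a :=
  ⟨ha, fun i k hi hik => (secondHalf n).injective (h.2 _ _ (by simpa) (by simpa))⟩

lemma rookRank_iota (a : Fin n → ℕ) : rookRank (2 * n) (iota n a) = rookRank n a := by
  refine (card_bij (fun i _ => secondHalf n i) (by simp)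
    (fun _ _ _ _ h => (secondHalf n).injective h) fun j hj => ?_).symm
  obtain hj' | ⟨i, rfl⟩ := lt_or_exists_secondHalf_eq j
  · simp [iota_of_lt a hj'] at hj
  · exact ⟨i, by simpa using hj, rfl⟩

end Iota

section BCRIota

variable {n : ℕ} {a b : Fin n → ℕ}

lemma bcrStep_iota_iff (ha : IsRook n a) (hb : IsRook n b) :
    BCRStep (2 * n) (iota n a) (iota n b) ↔ BCRStep n a b := by
  constructor
  · rintro ⟨-, -, ⟨i, hlt, heq⟩ | ⟨i, j, hij, h1, h2, h3, heq⟩⟩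
    · obtain hi | ⟨i, rfl⟩ := lt_or_exists_secondHalf_eq i
      · simp [iota_of_lt _ hi] at hlt
      refine ⟨ha, hb, .inl ⟨i, by simpa using hlt, fun k hk => ?_⟩⟩
      simpa using heq (secondHalf n k) ((secondHalf n).injective.ne hk)
    · obtain hi | ⟨i, rfl⟩ := lt_or_exists_secondHalf_eq i
      · simp [iota_of_lt b hi] at h3
      obtain hj | ⟨j, rfl⟩ := lt_or_exists_secondHalf_eq j
      · rw [Fin.lt_def, val_secondHalf] at hij
        omega
      simp only [iota_secondHalf, OrderEmbedding.lt_iff_lt] at hij h1 h2 h3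
      refine ⟨ha, hb, .inr ⟨i, j, hij, h1, h2, h3, fun m hmi hmj => ?_⟩⟩
      simpa using heq (secondHalf n m) ((secondHalf n).injective.ne hmi)
        ((secondHalf n).injective.ne hmj)
  · rintro ⟨-, -, ⟨i, hlt, heq⟩ | ⟨i, j, hij, h1, h2, h3, heq⟩⟩
    · refine ⟨isRook_iota ha, isRook_iota hb, .inl ⟨secondHalf n i, by simpa using hlt,
        fun k hk => iota_apply_eq_of_forall fun m hm => heq m ?_⟩⟩
      rintro rfl
      exact hk hm.symm
    · refine ⟨isRook_iota ha, isRook_iota hb, .inr ⟨secondHalf n i, secondHalf n j, by simpa,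
        by simpa, by simpa, by simpa, fun k hki hkj => iota_apply_eq_of_forall fun m hm => ?_⟩⟩
      exact heq m (by rintro rfl; exact hki hm.symm) (by rintro rfl; exact hkj hm.symm)

lemma BCRle.iota (h : BCRle n a b) : BCRle (2 * n) (_root_.iota n a) (_root_.iota n b) :=
  ReflTransGen.lift (_root_.iota n) (fun _ _ h => (bcrStep_iota_iff h.1 h.2.1).2 h) _ _ h

end BCRIota

section Count

variable {N : ℕ} {P : Fin N → Prop} {S : ℕ → Prop} {a b : Fin N → ℕ}

noncomputable def rookCount (P : Fin N → Prop) (S : ℕ → Prop) (a : Fin N → ℕ) : ℕ :=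
  #{i | P i ∧ S (a i)}

/-- Both generating relations move values up or to the left. -/
lemma rookCount_le_of_bcrStep (hP : ∀ i j, i ≤ j → P j → P i) (hS : ∀ u v, u ≤ v → S u → S v)
    (h : BCRStep N a b) : rookCount P S a ≤ rookCount P S b := by
  obtain ⟨-, -, ⟨i, hlt, heq⟩ | ⟨i, j, hij, h1, h2, h3, heq⟩⟩ := h
  · refine card_le_card fun m hm => ?_
    simp only [mem_filter, mem_univ, true_and] at hm ⊢
    obtain rfl | hmi := eq_or_ne m i
    · exact ⟨hm.1, hS _ _ hlt.le hm.2⟩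
    · exact heq m hmi ▸ hm
  · have hPji := hP i j hij.le
    have hSji := hS _ _ h3.le
    simp only [rookCount, card_filter]
    rw [← sum_add_sum_compl {i, j},
      ← sum_add_sum_compl {i, j} (fun m => if P m ∧ S (b m) then 1 else 0),
      sum_pair hij.ne, sum_pair hij.ne, ← h1, ← h2]
    refine add_le_add ?_ (sum_le_sum fun m hm => ?_)
    · split_ifs <;> first | omega | tauto
    · simp only [mem_compl, mem_insert, mem_singleton, not_or] at hm
      rw [heq m hm.1 hm.2]

lemma BCRle.rookCount_le (hP : ∀ i j, i ≤ j → P j → P i) (hS : ∀ u v, u ≤ v → S u → S v)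
    (h : BCRle N a b) : rookCount P S a ≤ rookCount P S b := by
  induction h with
  | refl => exact le_rfl
  | tail _ hstep ih => exact ih.trans (rookCount_le_of_bcrStep hP hS hstep)

lemma BCRle.forall_not_of_right (hP : ∀ i j, i ≤ j → P j → P i)
    (hS : ∀ u v, u ≤ v → S u → S v) (h : BCRle N a b) (hb : ∀ i, P i → ¬ S (b i)) :
    ∀ i, P i → ¬ S (a i) := by
  have hcount : rookCount P S b = 0 := card_eq_zero.2 (filter_eq_empty_iff.2 fun i _ => by tauto)
  have := Nat.le_zero.1 (hcount ▸ h.rookCount_le hP hS)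
  simpa [rookCount, filter_eq_empty_iff] using this

lemma BCRle.rookRank_le (h : BCRle N a b) : rookRank N a ≤ rookRank N b := by
  simpa [rookCount, rookRank] using
    h.rookCount_le (P := fun _ => True) (S := (· ≠ 0)) (by simp) (by intro u v huv hu; omega)

lemma BCRle.isRook_of_isRook_right (h : BCRle N a b) (hb : IsRook N b) : IsRook N a := by
  induction h using ReflTransGen.head_induction_on with
  | refl => exact hb
  | head hstep _ _ => exact hstep.1

end Count

section Rank

variable {n : ℕ} {a : Fin n → ℕ}

lemma rookRank_permRook (w : Equiv.Perm (Fin n)) : rookRank n (permRook n w) = n := by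
  simp [rookRank, permRook]

lemma IsRook.exists_perm_of_rookRank_eq (ha : IsRook n a) (hr : rookRank n a = n) :
    ∃ w : Equiv.Perm (Fin n), a = permRook n w := by
  have hpos : ∀ i, a i ≠ 0 := by
    simpa using filter_card_eq (p := fun i => a i ≠ 0) (s := univ) (by simpa [rookRank] using hr)
  let f : Fin n → Fin n := fun i => ⟨a i - 1, by have := ha.1 i; have := i.isLt; omega⟩
  have hf : Function.Injective f := fun i j hij => by
    have := hpos i; have := hpos j; have : a i - 1 = a j - 1 := congrArg Fin.val hij
    exact ha.2 i j (hpos i) (by omega)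
  refine ⟨Equiv.ofBijective f (Finite.injective_iff_bijective.1 hf), funext fun i => ?_⟩
  have := hpos i
  simp only [permRook, Equiv.ofBijective_apply, f]
  omega

end Rank

theorem Relation.ReflTransGen.of_map {α β : Type*} {R : β → β → Prop} {S : α → α → Prop}
    {f : α → β} (hf : Function.Injective f) {a b : α}
    (hconvex : ∀ z, ReflTransGen R (f a) z → ReflTransGen R z (f b) → ∃ c, f c = z)
    (hS : ∀ c d, R (f c) (f d) → S c d) (h : ReflTransGen R (f a) (f b)) :
    ReflTransGen S a b := by
  suffices ∀ z, ReflTransGen R z (f b) → ReflTransGen R (f a) z → ∀ c, f c = z →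
      ReflTransGen S c b from this _ h .refl a rfl
  intro z hz
  induction hz using ReflTransGen.head_induction_on with
  | refl => exact fun _ c hc => hf hc ▸ .refl
  | head hstep hrest ih =>
    rintro haz c rfl
    obtain ⟨c', rfl⟩ := hconvex _ (haz.tail hstep) hrest
    exact .head (hS c c' hstep) (ih (haz.tail hstep) c' rfl)

section Interval

variable {n : ℕ}

/-- Three invariants cut out the interval: nothing on the first `n` positions and no value above
`n` survive below `ι(w₀)`, and the rank `n` of `ι(id)` can only grow. -/
theorem exists_perm_of_mem_interval {x : Fin (2 * n) → ℕ} (hx : IsRook (2 * n) x)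
    (h₁ : BCRle (2 * n) (iota n (idRook n)) x) (h₂ : BCRle (2 * n) x (iota n (lastRook n))) :
    ∃ w : Equiv.Perm (Fin n), x = iota n (permRook n w) := by
  have hzero : ∀ j : Fin (2 * n), (j : ℕ) < n → ¬ x j ≠ 0 :=
    h₂.forall_not_of_right (P := fun j => (j : ℕ) < n) (S := (· ≠ 0))
      (fun i j hij hj => by omega) (fun u v huv hu => by omega)
      fun j hj => not_not.2 (iota_of_lt _ hj)
  have hle : ∀ j : Fin (2 * n), True → ¬ n < x j :=
    h₂.forall_not_of_right (S := (n < ·)) (fun _ _ _ _ => trivial) (fun u v huv hu => by omega)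
      fun j _ => not_lt.2 (iota_le_of_forall_le (fun i => Nat.sub_le n i) j)
  set a := x ∘ secondHalf n
  have hxa : x = iota n a := eq_iota_of_forall_lt fun j hj => not_not.1 (hzero j hj)
  rw [hxa] at hx h₁ ⊢
  have ha : IsRook n a := hx.of_iota fun i => not_lt.1 (hle (secondHalf n i) trivial)
  have hrank : rookRank n a = n := by
    refine le_antisymm ((card_filter_le _ _).trans_eq (card_fin n)) ?_
    simpa [rookRank_iota, ← permRook_one, rookRank_permRook] using h₁.rookRank_le
  obtain ⟨w, hw⟩ := ha.exists_perm_of_rookRank_eq hrank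
  exact ⟨w, congrArg (iota n) hw⟩

theorem mem_interval_iff {x : Fin (2 * n) → ℕ} (hx : IsRook (2 * n) x) :
    (BCRle (2 * n) (iota n (idRook n)) x ∧ BCRle (2 * n) x (iota n (lastRook n))) ↔
      ∃ w : Equiv.Perm (Fin n), x = iota n (permRook n w) := by
  refine ⟨fun h => exists_perm_of_mem_interval hx h.1 h.2, ?_⟩
  rintro ⟨w, rfl⟩
  exact ⟨(idRook_le_permRook w).iota, (permRook_le_lastRook w).iota⟩

theorem bcrLE_iota_permRook_iff {σ τ : Equiv.Perm (Fin n)} :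
    BCRle (2 * n) (iota n (permRook n σ)) (iota n (permRook n τ)) ↔
      BCRle n (permRook n σ) (permRook n τ) := by
  refine ⟨fun h => ?_, BCRle.iota⟩
  refine ReflTransGen.lift (permRook n) (fun _ _ h => h) _ _ (h.of_map
    (S := fun u v => BCRStep n (permRook n u) (permRook n v))
    (iota_injective.comp permRook_injective) (fun z hσz hzτ => ?_)
    fun u v huv => (bcrStep_iota_iff (isRook_permRook u) (isRook_permRook v)).1 huv)
  obtain ⟨w, rfl⟩ := exists_perm_of_mem_interval
    (BCRle.isRook_of_isRook_right hzτ (isRook_iota (isRook_permRook τ)))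
    ((idRook_le_permRook σ).iota.trans hσz) (hzτ.trans (permRook_le_lastRook τ).iota)
  exact ⟨w, rfl⟩

end Interval

/-- a `2n`-rook `x` satisfies `ι(id) ≤ x ≤ ι(w₀)` iff `x = ι(w)`
for some permutation `w` of `{1,…,n}`; consequently the interval
`[ι(id), ι(w₀)]` in the poset of `2n`-rooks is order-isomorphic to the
symmetric group `S_n` with the restriction of the Bruhat–Chevalley–Renner
order (the Bruhat order). -/
theorem stmt14 (n : ℕ) :
    (∀ x : Fin (2 * n) → ℕ, IsRook (2 * n) x →
      ((BCRle (2 * n) (iota n (idRook n)) x ∧ BCRle (2 * n) x (iota n (lastRook n))) ↔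
        ∃ w : Equiv.Perm (Fin n), x = iota n (permRook n w))) ∧
    ∃ F : {x : Fin (2 * n) → ℕ // IsRook (2 * n) x ∧
            BCRle (2 * n) (iota n (idRook n)) x ∧ BCRle (2 * n) x (iota n (lastRook n))}
          ≃ Equiv.Perm (Fin n),
      ∀ a b, BCRle (2 * n) a.val b.val ↔ BCRle n (permRook n (F a)) (permRook n (F b)) := by
  refine ⟨fun x hx => mem_interval_iff hx, ?_⟩
  let G (w : Equiv.Perm (Fin n)) : {x : Fin (2 * n) → ℕ // IsRook (2 * n) x ∧
      BCRle (2 * n) (iota n (idRook n)) x ∧ BCRle (2 * n) x (iota n (lastRook n))} :=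
    ⟨iota n (permRook n w), isRook_iota (isRook_permRook w), (mem_interval_iff
      (isRook_iota (isRook_permRook w))).2 ⟨w, rfl⟩⟩
  have hG : Function.Bijective G := by
    refine ⟨fun w w' h => permRook_injective (iota_injective (congrArg Subtype.val h)), ?_⟩
    rintro ⟨x, hx, hmem⟩
    obtain ⟨w, rfl⟩ := (mem_interval_iff hx).1 hmem
    exact ⟨w, rfl⟩
  refine ⟨(Equiv.ofBijective G hG).symm, fun a b => ?_⟩
  obtain ⟨σ, rfl⟩ := hG.2 a
  obtain ⟨τ, rfl⟩ := hG.2 b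
  simpa only [Equiv.ofBijective_symm_apply_apply] using bcrLE_iota_permRook_iff
end

section
/- Let id be the n-rook with id(i) = i for all i. Then for every n-rook σ, σ ≤ id in the Bruhat–Chevalley–Renner order if and only if σ is upper triangular, i.e., σ(i) ≤ i for all i. Hence the set of upper triangular n-rooks is exactly the lower interval [0, id] in the poset of n-rooks. -/
open scoped Classical

/-!
Going down along a generating relation either lowers one entry or moves a larger value
to the right, so upper triangularity is inherited downwards. Conversely, an upper
triangular `σ` climbs to `id` by raising its entries to `i + 1` one position at a time,
from right to left: every intermediate function is still a rook, because the entries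
already raised at positions `≥ m` exceed `m ≥ σ i` for all `i < m`. In the same way `0`
climbs to any rook `σ`.
-/

def IsUpperTriangular (n : ℕ) (a : Fin n → ℕ) : Prop :=
  ∀ i : Fin n, a i ≤ i.val + 1

lemma isUpperTriangular_idRook (n : ℕ) : IsUpperTriangular n (idRook n) :=
  fun _ => le_rfl

lemma IsUpperTriangular.of_bcrStep {n : ℕ} {a b : Fin n → ℕ} (h : BCRStep n a b)
    (hb : IsUpperTriangular n b) : IsUpperTriangular n a := by
  obtain ⟨-, -, ⟨i, hlt, hrest⟩ | ⟨i, j, hij, hbi, hbj, hlt, hrest⟩⟩ := h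
  · intro k
    by_cases hk : k = i
    · subst hk; exact hlt.le.trans (hb k)
    · rw [hrest k hk]; exact hb k
  · intro k
    have hbi' := hb i
    have hij' : i.val < j.val := hij
    by_cases hki : k = i
    · subst hki; omega
    by_cases hkj : k = j
    · subst hkj; omega
    rw [hrest k hki hkj]; exact hb k

lemma IsUpperTriangular.of_bcrle {n : ℕ} {a b : Fin n → ℕ} (h : BCRle n a b)
    (hb : IsUpperTriangular n b) : IsUpperTriangular n a := by
  induction h using Relation.ReflTransGen.head_induction_on with
  | refl => exact hb
  | head hstep _ ih => exact ih.of_bcrStep hstep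

lemma bcrle_update_of_le {n : ℕ} {a : Fin n → ℕ} {i : Fin n} {v : ℕ} (ha : IsRook n a)
    (hupd : IsRook n (Function.update a i v)) (hv : a i ≤ v) :
    BCRle n a (Function.update a i v) := by
  rcases hv.lt_or_eq with hlt | rfl
  · refine .single ⟨ha, hupd, .inl ⟨i, by simpa using hlt, fun j hj => ?_⟩⟩
    exact (Function.update_of_ne hj _ _).symm
  · rw [Function.update_eq_self]; exact .refl

def splice {n : ℕ} (m : ℕ) (a b : Fin n → ℕ) : Fin n → ℕ :=
  fun i => if i.val < m then a i else b i

lemma splice_zero {n : ℕ} (a b : Fin n → ℕ) : splice 0 a b = b := by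
  funext i; simp [splice]

lemma splice_self {n : ℕ} (a b : Fin n → ℕ) : splice n a b = a := by
  funext i; simp [splice]

lemma splice_eq_update_splice_succ {n m : ℕ} (hm : m < n) (a b : Fin n → ℕ) :
    splice m a b = Function.update (splice (m + 1) a b) ⟨m, hm⟩ (b ⟨m, hm⟩) := by
  funext i
  by_cases hi : i = ⟨m, hm⟩
  · subst hi; simp [splice]
  · have hi' : i.val ≠ m := fun h => hi (Fin.ext h)
    simp only [splice, Function.update_of_ne hi]
    split_ifs <;> first | rfl | omega

lemma isRook_splice {n m : ℕ} {a b : Fin n → ℕ} (ha : IsRook n a) (hb : IsRook n b)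
    (hdisj : ∀ i j : Fin n, i.val < m → m ≤ j.val → a i ≠ 0 → a i ≠ b j) :
    IsRook n (splice m a b) := by
  refine ⟨fun i => ?_, fun i j hi hij => ?_⟩
  · unfold splice; split_ifs
    exacts [ha.1 i, hb.1 i]
  · unfold splice at hi hij
    split_ifs at hi hij with h1 h2 h2
    · exact ha.2 i j hi hij
    · exact absurd hij (hdisj i j h1 (not_lt.1 h2) hi)
    · exact absurd hij.symm (hdisj j i h2 (not_lt.1 h1) (hij ▸ hi))
    · exact hb.2 i j hi hij

lemma bcrle_of_le_of_isRook_splice {n : ℕ} {a b : Fin n → ℕ} (hab : ∀ i, a i ≤ b i)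
    (hsplice : ∀ m, IsRook n (splice m a b)) : BCRle n a b := by
  suffices ∀ m ≤ n, BCRle n (splice m a b) b by simpa [splice_self] using this n le_rfl
  intro m hm
  induction m with
  | zero => rw [splice_zero]; exact .refl
  | succ m ih =>
    have hm' : m < n := hm
    refine .trans ?_ (ih hm'.le)
    rw [splice_eq_update_splice_succ hm']
    refine bcrle_update_of_le (hsplice _) ?_ ?_
    · rw [← splice_eq_update_splice_succ hm']; exact hsplice m
    · simpa [splice] using hab ⟨m, hm'⟩

lemma isRook_zero (n : ℕ) : IsRook n (fun _ => 0) :=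
  ⟨fun _ => Nat.zero_le n, fun _ _ h _ => absurd rfl h⟩

lemma isRook_idRook (n : ℕ) : IsRook n (idRook n) :=
  ⟨fun i => i.isLt, fun _ _ _ h => Fin.ext (Nat.succ_injective h)⟩

lemma zero_bcrle {n : ℕ} {σ : Fin n → ℕ} (hσ : IsRook n σ) : BCRle n (fun _ => 0) σ :=
  bcrle_of_le_of_isRook_splice (fun i => Nat.zero_le (σ i))
    fun _ => isRook_splice (isRook_zero n) hσ fun _ _ _ _ h => absurd rfl h

lemma IsUpperTriangular.bcrle_idRook {n : ℕ} {σ : Fin n → ℕ} (hσ : IsRook n σ)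
    (hut : IsUpperTriangular n σ) : BCRle n σ (idRook n) := by
  refine bcrle_of_le_of_isRook_splice hut fun m => isRook_splice hσ (isRook_idRook n) ?_
  intro i j hi hj _ heq
  have := hut i
  simp only [idRook] at heq
  omega

/-- an `n`-rook `σ` satisfies `σ ≤ id` in the
Bruhat–Chevalley–Renner order iff `σ` is upper triangular (`σ(i) ≤ i` for all
`i`); hence the upper triangular `n`-rooks are exactly the lower interval
`[0, id]`. -/
theorem stmt15 (n : ℕ) (σ : Fin n → ℕ) (hσ : IsRook n σ) :
    (BCRle n σ (idRook n) ↔ ∀ i : Fin n, σ i ≤ i.val + 1) ∧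
    ((∀ i : Fin n, σ i ≤ i.val + 1) ↔
      (BCRle n (fun _ => 0) σ ∧ BCRle n σ (idRook n))) := by
  have hiff : BCRle n σ (idRook n) ↔ IsUpperTriangular n σ :=
    ⟨fun h => (isUpperTriangular_idRook n).of_bcrle h, fun hut => hut.bcrle_idRook hσ⟩
  exact ⟨hiff, ⟨fun hut => ⟨zero_bcrle hσ, hiff.2 hut⟩, fun h => hiff.1 h.2⟩⟩
end

section
/- For every n ≥ 1 and every integer k with 1 ≤ k ≤ n+1, the polynomials T_{m,j}(q) satisfy the recurrence T_{n+1,k}(q) = q^k · T_{n,k}(q) + [n+1−k]_q · q^k · T_{n,k−1}(q), where [j]_q = 1 + q + ⋯ + q^{j−1} (and [0]_q = 0). -/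
open scoped Classical
/-- `(i,j)` is an arc of the set partition `P` of `{1,…,n}` (realized on `Fin n`):
`i < j`, both lie in a common block, and no element of that block is strictly
between `i` and `j`. -/
def IsArc {n : ℕ} (P : Finpartition (Finset.univ : Finset (Fin n))) (i j : Fin n) : Prop :=
  i < j ∧ ∃ b ∈ P.parts, i ∈ b ∧ j ∈ b ∧ ∀ k ∈ b, ¬(i < k ∧ k < j)

/-- The finite set of arcs of a set partition. -/
noncomputable def arcs {n : ℕ} (P : Finpartition (Finset.univ : Finset (Fin n))) :
    Finset (Fin n × Fin n) :=
  Finset.univ.filter (fun p => IsArc P p.1 p.2)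

/-- Depth of a vertex `v`: the number of arcs `(r,s)` with `r < v < s`. -/
noncomputable def depthV {n : ℕ} (P : Finpartition (Finset.univ : Finset (Fin n)))
    (v : Fin n) : ℕ :=
  ((arcs P).filter (fun p => p.1 < v ∧ v < p.2)).card

/-- Depth of an arc `α = (i,j)`: the number of arcs `(r,s)` with `r < i` and `s > j`. -/
noncomputable def depthArc {n : ℕ} (P : Finpartition (Finset.univ : Finset (Fin n)))
    (α : Fin n × Fin n) : ℕ :=
  ((arcs P).filter (fun p => p.1 < α.1 ∧ α.2 < p.2)).card

/-- Depth of a block `b` (with minimum `i` and maximum `j`): the number of arcs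
`(r,s)` with `r < i` and `s > j`; equivalently (for the nonempty blocks of a
partition) the arcs lying strictly above every vertex of `b`. -/
noncomputable def depthBlock {n : ℕ} (P : Finpartition (Finset.univ : Finset (Fin n)))
    (b : Finset (Fin n)) : ℕ :=
  ((arcs P).filter (fun p => ∀ v ∈ b, p.1 < v ∧ v < p.2)).card

/-- Two arcs `(i,j)` and `(r,s)` cross if `i < r < j < s` or `r < i < s < j`. -/
def ArcCross {n : ℕ} (α β : Fin n × Fin n) : Prop :=
  (α.1 < β.1 ∧ β.1 < α.2 ∧ α.2 < β.2) ∨ (β.1 < α.1 ∧ α.1 < β.2 ∧ β.2 < α.2)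

/-- `cross(α)`: the number of blocks of `P` containing at least one arc crossing `α`. -/
noncomputable def crossNum {n : ℕ} (P : Finpartition (Finset.univ : Finset (Fin n)))
    (α : Fin n × Fin n) : ℕ :=
  (P.parts.filter (fun b => ∃ p ∈ arcs P, p.1 ∈ b ∧ p.2 ∈ b ∧ ArcCross α p)).card

/-- The depth-index `t(A) = Σ_{i=1}^{k}(n−i) − Σ_v depth(v) + Σ_α depth(α)`,
where `k` is the number of arcs. -/
noncomputable def tIdx {n : ℕ} (P : Finpartition (Finset.univ : Finset (Fin n))) : ℤ :=
  (∑ i ∈ Finset.range (arcs P).card, ((n : ℤ) - (i + 1)))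
    - (∑ v : Fin n, (depthV P v : ℤ))
    + ∑ α ∈ arcs P, (depthArc P α : ℤ)

/-- The crossing-index `c(A) = Σ_{i=1}^{k}(n−i) − Σ_β depth(β) − Σ_α cross(α)`. -/
noncomputable def cIdx {n : ℕ} (P : Finpartition (Finset.univ : Finset (Fin n))) : ℤ :=
  (∑ i ∈ Finset.range (arcs P).card, ((n : ℤ) - (i + 1)))
    - (∑ b ∈ P.parts, (depthBlock P b : ℤ))
    - ∑ α ∈ arcs P, (crossNum P α : ℤ)

/-- The rook `φ(A)` associated to a set partition: `φ(A)(j) = i` (in 1-based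
values) whenever `(i,j)` is an arc, and `φ(A)(j) = 0` otherwise. Since at most
one arc ends at `j`, the sum below picks out that unique value. -/
noncomputable def phiRook {n : ℕ} (P : Finpartition (Finset.univ : Finset (Fin n))) :
    Fin n → ℕ :=
  fun j => ∑ i : Fin n, if IsArc P i j then i.val + 1 else 0

/-- `T_{m,j}(q) = Σ_A q^{t(A)}`, summing over all set partitions `A` of
`{1,…,m}` with exactly `j` arcs. -/
noncomputable def Tpoly (m j : ℕ) : Polynomial ℤ :=
  ∑ A ∈ (Finset.univ.filter
      (fun A : Finpartition (Finset.univ : Finset (Fin m)) => (arcs A).card = j)),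
    Polynomial.X ^ (tIdx A).toNat

/-!
Deleting the vertex `n + 1` from a partition of `{1, …, n + 1}` leaves a partition `A` of
`{1, …, n}` with, say, `a` arcs and hence `n - a` blocks; conversely `n + 1` is either added to
`A` as a singleton or attached to the block of one of its `n - a` block maxima `x`.
A singleton changes neither the arcs nor any depth, and only shifts each term of `Σ (n - i)`,
so `t` grows by `a`. Attaching `n + 1` to the block of `x` creates the arc `(x, n + 1)`: the sum
`Σ (n - i)` grows by `n`, the `n - x` vertices beyond `x` each gain one unit of depth, and so
does every arc starting after `x`. Since each vertex is the left end of exactly one arc or is a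
block maximum, `t` grows by `a + r`, where `r` is the rank of `x` among the block maxima.
Summing `q ^ r` over `r = 1, …, n - a` produces `q · [n - a]_q`.
-/

namespace Finpartition

variable {α : Type*} [DecidableEq α]

lemma ext_of_part {s : Finset α} {P Q : Finpartition s} (h : ∀ a ∈ s, P.part a = Q.part a) :
    P = Q := by
  have parts_le : ∀ {P Q : Finpartition s}, (∀ a ∈ s, P.part a = Q.part a) →
      ∀ b ∈ P.parts, b ∈ Q.parts := by
    intro P Q h b hb
    obtain ⟨a, ha, rfl⟩ := P.part_surjOn hb
    rw [h a ha]
    exact Q.part_mem.2 ha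
  ext b
  exact ⟨parts_le h b, parts_le (fun a ha => (h a ha).symm) b⟩

variable [Fintype α]

lemma ext_of_part_eq_part_iff {P Q : Finpartition (Finset.univ : Finset α)}
    (h : ∀ a b, P.part a = P.part b ↔ Q.part a = Q.part b) : P = Q := by
  refine ext_of_part fun a _ => Finset.ext fun b => ?_
  rw [P.mem_part_iff_part_eq_part (Finset.mem_univ b) (Finset.mem_univ a),
    Q.mem_part_iff_part_eq_part (Finset.mem_univ b) (Finset.mem_univ a), h]

lemma part_ofSetoid_eq_part_iff (r : Setoid α) [DecidableRel r.r] {a b : α} :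
    (ofSetoid r).part a = (ofSetoid r).part b ↔ r a b := by
  rw [eq_comm, ← (ofSetoid r).mem_part_iff_part_eq_part (Finset.mem_univ b) (Finset.mem_univ a),
    mem_part_ofSetoid_iff_rel]

end Finpartition

namespace Finset

lemma sum_comp_card_filter_le {α M : Type*} [LinearOrder α] [AddCommMonoid M]
    (s : Finset α) (f : ℕ → M) :
    ∑ x ∈ s, f #{y ∈ s | y ≤ x} = ∑ i ∈ range #s, f (i + 1) := by
  induction s using Finset.induction_on_max with
  | empty => simp
  | insert a s h_lt ih =>
    have h_notMem : a ∉ s := fun h => (h_lt a h).false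
    have h_top : {y ∈ insert a s | y ≤ a} = insert a s :=
      filter_true_of_mem fun y hy => (mem_insert.1 hy).elim le_of_eq fun hy => (h_lt y hy).le
    have h_below (x : α) (hx : x ∈ s) : {y ∈ insert a s | y ≤ x} = {y ∈ s | y ≤ x} := by
      rw [filter_insert, if_neg (h_lt x hx).not_ge]
    rw [sum_insert h_notMem, h_top, card_insert_of_notMem h_notMem, sum_range_succ,
      sum_congr rfl fun x hx => congrArg f (congrArg _ (h_below x hx)), ih, add_comm]

end Finset

namespace DepthIndex

open Finset Polynomial

abbrev SetPartition (m : ℕ) := Finpartition (univ : Finset (Fin m))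

section

variable {m : ℕ} {P : SetPartition m}

lemma isArc_iff {i j : Fin m} :
    IsArc P i j ↔
      i < j ∧ P.part i = P.part j ∧ ∀ k, P.part i = P.part k → ¬(i < k ∧ k < j) := by
  have mem_iff (k : Fin m) : k ∈ P.part i ↔ P.part i = P.part k :=
    (P.mem_part_iff_part_eq_part (mem_univ k) (mem_univ i)).trans eq_comm
  constructor
  · rintro ⟨hij, b, hb, hib, hjb, hbet⟩
    obtain rfl := P.part_eq_of_mem hb hib
    exact ⟨hij, (mem_iff j).1 hjb, fun k hk => hbet k ((mem_iff k).2 hk)⟩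
  · rintro ⟨hij, hj, hbet⟩
    exact ⟨hij, P.part i, P.part_mem.2 (mem_univ i), P.mem_part (mem_univ i), (mem_iff j).2 hj,
      fun k hk => hbet k ((mem_iff k).1 hk)⟩

lemma _root_.IsArc.lt {i j : Fin m} (h : IsArc P i j) : i < j := (isArc_iff.1 h).1

lemma _root_.IsArc.part_eq {i j : Fin m} (h : IsArc P i j) : P.part i = P.part j :=
  (isArc_iff.1 h).2.1

lemma _root_.IsArc.not_between {i j k : Fin m} (h : IsArc P i j) (hk : P.part i = P.part k) :
    ¬(i < k ∧ k < j) :=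
  (isArc_iff.1 h).2.2 k hk

lemma _root_.IsArc.right_unique {i j j' : Fin m} (h : IsArc P i j) (h' : IsArc P i j') :
    j = j' := by
  rcases lt_trichotomy j j' with hlt | rfl | hlt
  · exact absurd ⟨h.lt, hlt⟩ (h'.not_between h.part_eq)
  · rfl
  · exact absurd ⟨h'.lt, hlt⟩ (h.not_between h'.part_eq)

lemma mem_arcs {p : Fin m × Fin m} : p ∈ arcs P ↔ IsArc P p.1 p.2 := by
  simp [arcs]

lemma exists_isArc_of_lt {x y : Fin m} (hxy : x < y) (h : P.part x = P.part y) :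
    ∃ j, IsArc P x j := by
  have mem_iff (k : Fin m) : k ∈ P.part x ↔ P.part x = P.part k :=
    (P.mem_part_iff_part_eq_part (mem_univ k) (mem_univ x)).trans eq_comm
  set later := {z ∈ P.part x | x < z}
  have hne : later.Nonempty := ⟨y, mem_filter.2 ⟨(mem_iff y).2 h, hxy⟩⟩
  obtain ⟨hmem, hlt⟩ := mem_filter.1 (later.min'_mem hne)
  refine ⟨later.min' hne,
    isArc_iff.2 ⟨hlt, (mem_iff _).1 hmem, fun k hk ⟨hxk, hkj⟩ => ?_⟩⟩
  exact (later.min'_le k (mem_filter.2 ⟨(mem_iff k).2 hk, hxk⟩)).not_gt hkj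

def IsBlockMax (P : SetPartition m) (x : Fin m) : Prop := ∀ y, P.part x = P.part y → y ≤ x

noncomputable def blockMaxima (P : SetPartition m) : Finset (Fin m) := {x | IsBlockMax P x}

noncomputable def blockMaxRank (P : SetPartition m) (x : Fin m) : ℕ :=
  #{y ∈ blockMaxima P | y ≤ x}

lemma mem_blockMaxima {x : Fin m} : x ∈ blockMaxima P ↔ IsBlockMax P x := by
  simp [blockMaxima]

lemma image_fst_arcs : (arcs P).image Prod.fst = (blockMaxima P)ᶜ := by
  ext x
  simp only [mem_image, mem_arcs, mem_compl, mem_blockMaxima, IsBlockMax, not_forall, not_le,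
    Prod.exists, exists_and_right, exists_eq_right]
  constructor
  · rintro ⟨j, hj⟩
    exact ⟨j, hj.part_eq, hj.lt⟩
  · rintro ⟨y, hy, hxy⟩
    exact exists_isArc_of_lt hxy hy

lemma injOn_fst_arcs : Set.InjOn Prod.fst (arcs P : Set (Fin m × Fin m)) := by
  rintro ⟨i, j⟩ hp ⟨i', j'⟩ hq (rfl : i = i')
  rw [mem_coe, mem_arcs] at hp hq
  exact Prod.ext rfl (hp.right_unique hq)

lemma card_arcs_add_card_blockMaxima : #(arcs P) + #(blockMaxima P) = m := by
  have h := card_image_of_injOn (injOn_fst_arcs (P := P))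
  rw [image_fst_arcs, card_compl, Fintype.card_fin] at h
  have := card_le_univ (blockMaxima P)
  rw [Fintype.card_fin] at this
  omega

lemma val_add_card_arcs_gt (x : Fin m) :
    x + 1 + #{α ∈ arcs P | x < α.1} = #(arcs P) + blockMaxRank P x := by
  have h_split : #{α ∈ arcs P | α.1 ≤ x} + #{α ∈ arcs P | x < α.1} = #(arcs P) := by
    simpa only [not_le] using card_filter_add_card_filter_not (s := arcs P) (fun α => α.1 ≤ x)
  have h_left : #{α ∈ arcs P | α.1 ≤ x} = #{y ∈ (blockMaxima P)ᶜ | y ≤ x} := by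
    rw [← image_fst_arcs, filter_image,
      card_image_of_injOn (injOn_fst_arcs.mono (coe_subset.2 (filter_subset _ _)))]
  have h_all : #{y ∈ (blockMaxima P)ᶜ | y ≤ x} + blockMaxRank P x = x + 1 := by
    rw [blockMaxRank, ← card_union_of_disjoint (disjoint_filter_filter disjoint_compl_left),
      ← filter_union, union_comm, union_compl, filter_ge_eq_Iic, Fin.card_Iic]
  omega

end

variable {n : ℕ}

noncomputable def restrict (P : SetPartition (n + 1)) : SetPartition n :=
  Finpartition.ofSetoid (Setoid.ker fun u : Fin n => P.part u.castSucc)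

/-- `extend A o` adds the vertex `Fin.last n` to `A`, in the block of `x` if `o = some x` and as
a singleton if `o = none` (as `∅` is not a part of `A`). -/
noncomputable def extend (A : SetPartition n) (o : Option (Fin n)) : SetPartition (n + 1) :=
  Finpartition.ofSetoid
    (Setoid.ker (Fin.snoc (α := fun _ => Finset (Fin n)) A.part (o.elim ∅ A.part)))

def castSuccPair : Fin n × Fin n ↪ Fin (n + 1) × Fin (n + 1) :=
  Fin.castSuccEmb.prodMap Fin.castSuccEmb

lemma part_restrict_eq_iff {P : SetPartition (n + 1)} {u v : Fin n} :
    (restrict P).part u = (restrict P).part v ↔ P.part u.castSucc = P.part v.castSucc := by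
  rw [restrict, Finpartition.part_ofSetoid_eq_part_iff, Setoid.ker_def]

lemma SetPartition.ext_of_castSucc {P Q : SetPartition (n + 1)}
    (h : ∀ u v : Fin n,
      P.part u.castSucc = P.part v.castSucc ↔ Q.part u.castSucc = Q.part v.castSucc)
    (h_last : ∀ u : Fin n,
      P.part u.castSucc = P.part (Fin.last n) ↔ Q.part u.castSucc = Q.part (Fin.last n)) :
    P = Q := by
  refine Finpartition.ext_of_part_eq_part_iff fun a b => ?_
  induction a using Fin.lastCases with
  | last =>
    induction b using Fin.lastCases with
    | last => simp only
    | cast v => rw [eq_comm, h_last, eq_comm]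
  | cast u =>
    induction b using Fin.lastCases with
    | last => exact h_last u
    | cast v => exact h u v

lemma not_isArc_last {m : ℕ} (P : SetPartition (m + 1)) (j : Fin (m + 1)) :
    ¬IsArc P (Fin.last m) j :=
  fun h => h.lt.not_ge (Fin.le_last j)

lemma depthV_last {m : ℕ} (P : SetPartition (m + 1)) : depthV P (Fin.last m) = 0 := by
  rw [depthV, card_eq_zero, filter_eq_empty_iff]
  exact fun p _ ⟨_, h⟩ => h.not_ge (Fin.le_last p.2)

lemma depthArc_of_snd_eq_last {m : ℕ} (P : SetPartition (m + 1)) {α : Fin (m + 1) × Fin (m + 1)}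
    (hα : α.2 = Fin.last m) : depthArc P α = 0 := by
  rw [depthArc, card_eq_zero, filter_eq_empty_iff, hα]
  exact fun p _ ⟨_, h⟩ => h.not_ge (Fin.le_last p.2)

lemma castSucc_last_notMem_map_castSuccPair (S : Finset (Fin n × Fin n)) (x : Fin n) :
    (x.castSucc, Fin.last n) ∉ S.map castSuccPair := by
  simp [castSuccPair, Fin.castSucc_ne_last]

lemma card_filter_map_castSuccPair (S : Finset (Fin n × Fin n))
    (c : Fin (n + 1) × Fin (n + 1) → Prop) [DecidablePred c] :
    #((S.map castSuccPair).filter c) = #(S.filter (c ∘ castSuccPair)) := by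
  rw [filter_map, card_map]

lemma card_filter_insert_map_castSuccPair (S : Finset (Fin n × Fin n)) (x : Fin n)
    (c : Fin (n + 1) × Fin (n + 1) → Prop) [DecidablePred c] :
    #((insert (x.castSucc, Fin.last n) (S.map castSuccPair)).filter c)
      = #(S.filter (c ∘ castSuccPair)) + if c (x.castSucc, Fin.last n) then 1 else 0 := by
  rw [filter_insert]
  split_ifs
  · rw [card_insert_of_notMem fun h =>
      castSucc_last_notMem_map_castSuccPair S x (mem_filter.1 h).1, card_filter_map_castSuccPair]
  · rw [card_filter_map_castSuccPair, add_zero]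

lemma sum_range_natCast_succ_sub (N c : ℕ) :
    ∑ i ∈ range c, (((N + 1 : ℕ) : ℤ) - (i + 1))
      = ∑ i ∈ range c, ((N : ℤ) - (i + 1)) + c := by
  simp [add_sub_right_comm _ (1 : ℤ), sum_add_distrib]

section extend

variable {A : SetPartition n} {o : Option (Fin n)}

lemma part_extend_castSucc_eq_iff {u v : Fin n} :
    (extend A o).part u.castSucc = (extend A o).part v.castSucc ↔ A.part u = A.part v := by
  rw [extend, Finpartition.part_ofSetoid_eq_part_iff, Setoid.ker_def, Fin.snoc_castSucc,
    Fin.snoc_castSucc]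

lemma part_extend_castSucc_eq_last_iff {u : Fin n} :
    (extend A o).part u.castSucc = (extend A o).part (Fin.last n) ↔
      A.part u = o.elim ∅ A.part := by
  rw [extend, Finpartition.part_ofSetoid_eq_part_iff, Setoid.ker_def, Fin.snoc_castSucc,
    Fin.snoc_last]

lemma restrict_extend : restrict (extend A o) = A :=
  Finpartition.ext_of_part_eq_part_iff fun _ _ => by
    rw [part_restrict_eq_iff, part_extend_castSucc_eq_iff]

lemma exists_extend_restrict (P : SetPartition (n + 1)) :
    ∃ o, (∀ x ∈ o, IsBlockMax (restrict P) x) ∧ extend (restrict P) o = P := by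
  have h_cast (o) : ∀ u v : Fin n, (extend (restrict P) o).part u.castSucc
      = (extend (restrict P) o).part v.castSucc ↔ P.part u.castSucc = P.part v.castSucc := by
    intro u v
    rw [part_extend_castSucc_eq_iff, part_restrict_eq_iff]
  by_cases h_attached : ∃ u : Fin n, P.part u.castSucc = P.part (Fin.last n)
  · -- `P` attaches `Fin.last n` to the largest earlier vertex of its block
    set withLast : Finset (Fin n) := {u | P.part u.castSucc = P.part (Fin.last n)}
    have hne : withLast.Nonempty :=
      let ⟨u, hu⟩ := h_attached
      ⟨u, mem_filter.2 ⟨mem_univ u, hu⟩⟩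
    set x := withLast.max' hne
    have hx : P.part x.castSucc = P.part (Fin.last n) := (mem_filter.1 (withLast.max'_mem hne)).2
    refine ⟨some x, ?_, SetPartition.ext_of_castSucc (h_cast (some x)) fun u => ?_⟩
    · rintro _ ⟨⟩ y hy
      rw [part_restrict_eq_iff] at hy
      exact withLast.le_max' y (mem_filter.2 ⟨mem_univ y, hy ▸ hx⟩)
    · rw [part_extend_castSucc_eq_last_iff, Option.elim_some, part_restrict_eq_iff, hx]
  · rw [not_exists] at h_attached
    refine ⟨none, by simp, SetPartition.ext_of_castSucc (h_cast none) fun u => ?_⟩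
    simp [part_extend_castSucc_eq_last_iff, h_attached u]

lemma isArc_extend_castSucc_iff {u v : Fin n} :
    IsArc (extend A o) u.castSucc v.castSucc ↔ IsArc A u v := by
  simp only [isArc_iff, Fin.castSucc_lt_castSucc_iff, part_extend_castSucc_eq_iff]
  refine and_congr_right fun _ => and_congr_right fun _ => ⟨fun h w hw => ?_, fun h k hk => ?_⟩
  · rw [← Fin.castSucc_lt_castSucc_iff, ← Fin.castSucc_lt_castSucc_iff (a := w)]
    exact h w.castSucc (part_extend_castSucc_eq_iff.2 hw)
  · induction k using Fin.lastCases with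
    | last => exact fun ⟨_, hlt⟩ => hlt.not_ge (Fin.le_last _)
    | cast w =>
      rw [Fin.castSucc_lt_castSucc_iff, Fin.castSucc_lt_castSucc_iff]
      exact h w (part_extend_castSucc_eq_iff.1 hk)

lemma isArc_extend_castSucc_last_iff (ho : ∀ x ∈ o, IsBlockMax A x) {u : Fin n} :
    IsArc (extend A o) u.castSucc (Fin.last n) ↔ o = some u := by
  constructor
  · intro h
    have h_part := part_extend_castSucc_eq_last_iff.1 h.part_eq
    cases o with
    | none => simp at h_part
    | some x =>
      rw [Option.elim_some] at h_part
      rcases lt_trichotomy u x with hlt | rfl | hlt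
      · exact absurd ⟨Fin.castSucc_lt_castSucc_iff.2 hlt, Fin.castSucc_lt_last x⟩
          (h.not_between (part_extend_castSucc_eq_iff.2 h_part))
      · rfl
      · exact absurd (ho x rfl u h_part.symm) hlt.not_ge
  · rintro rfl
    refine isArc_iff.2 ⟨Fin.castSucc_lt_last u, part_extend_castSucc_eq_last_iff.2 rfl,
      fun k hk ⟨huk, hkl⟩ => ?_⟩
    induction k using Fin.lastCases with
    | last => exact hkl.ne rfl
    | cast w =>
      exact (ho u rfl w (part_extend_castSucc_eq_iff.1 hk)).not_gt
        (Fin.castSucc_lt_castSucc_iff.1 huk)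

lemma mem_arcs_extend (ho : ∀ x ∈ o, IsBlockMax A x) {p : Fin (n + 1) × Fin (n + 1)} :
    p ∈ arcs (extend A o) ↔
      p ∈ (arcs A).map castSuccPair ∨ ∃ x ∈ o, (x.castSucc, Fin.last n) = p := by
  obtain ⟨i, j⟩ := p
  rw [mem_arcs]
  induction i using Fin.lastCases with
  | last => simp [not_isArc_last, castSuccPair]
  | cast u =>
    induction j using Fin.lastCases with
    | last => simp [isArc_extend_castSucc_last_iff ho, castSuccPair, eq_comm]
    | cast v =>
      simp [isArc_extend_castSucc_iff, castSuccPair, mem_arcs, (Fin.castSucc_ne_last v).symm]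

lemma arcs_extend_none : arcs (extend A none) = (arcs A).map castSuccPair := by
  ext p
  simp [mem_arcs_extend]

lemma arcs_extend_some {x : Fin n} (hx : IsBlockMax A x) :
    arcs (extend A (some x)) = insert (x.castSucc, Fin.last n) ((arcs A).map castSuccPair) := by
  ext p
  rw [mem_arcs_extend (by simpa using hx), mem_insert]
  simp [eq_comm, or_comm]

lemma card_arcs_extend_none : #(arcs (extend A none)) = #(arcs A) := by
  rw [arcs_extend_none, card_map]

lemma card_arcs_extend_some {x : Fin n} (hx : IsBlockMax A x) :
    #(arcs (extend A (some x))) = #(arcs A) + 1 := by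
  rw [arcs_extend_some hx, card_insert_of_notMem (castSucc_last_notMem_map_castSuccPair _ x),
    card_map]

lemma depthV_extend_none_castSucc (v : Fin n) :
    depthV (extend A none) v.castSucc = depthV A v := by
  rw [depthV, depthV, arcs_extend_none, card_filter_map_castSuccPair]
  simp [castSuccPair, Function.comp_def]

lemma depthV_extend_some_castSucc {x : Fin n} (hx : IsBlockMax A x) (v : Fin n) :
    depthV (extend A (some x)) v.castSucc = depthV A v + if x < v then 1 else 0 := by
  rw [depthV, depthV, arcs_extend_some hx, card_filter_insert_map_castSuccPair]
  simp [castSuccPair, Function.comp_def, Fin.castSucc_lt_last]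

lemma depthArc_extend_none_castSuccPair (α : Fin n × Fin n) :
    depthArc (extend A none) (castSuccPair α) = depthArc A α := by
  rw [depthArc, depthArc, arcs_extend_none, card_filter_map_castSuccPair]
  simp [castSuccPair, Function.comp_def]

lemma depthArc_extend_some_castSuccPair {x : Fin n} (hx : IsBlockMax A x) (α : Fin n × Fin n) :
    depthArc (extend A (some x)) (castSuccPair α) = depthArc A α + if x < α.1 then 1 else 0 := by
  rw [depthArc, depthArc, arcs_extend_some hx, card_filter_insert_map_castSuccPair]
  simp [castSuccPair, Function.comp_def, Fin.castSucc_lt_last]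

lemma sum_depthV_extend_none :
    ∑ v, (depthV (extend A none) v : ℤ) = ∑ v, (depthV A v : ℤ) := by
  simp [Fin.sum_univ_castSucc, depthV_last, depthV_extend_none_castSucc]

lemma sum_depthV_extend_some {x : Fin n} (hx : IsBlockMax A x) :
    ∑ v, (depthV (extend A (some x)) v : ℤ) = ∑ v, (depthV A v : ℤ) + #(Ioi x) := by
  simp [Fin.sum_univ_castSucc, depthV_last, depthV_extend_some_castSucc hx, sum_add_distrib,
    filter_lt_eq_Ioi]

lemma sum_depthArc_extend_none :
    ∑ α ∈ arcs (extend A none), (depthArc (extend A none) α : ℤ)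
      = ∑ α ∈ arcs A, (depthArc A α : ℤ) := by
  simp [arcs_extend_none, depthArc_extend_none_castSuccPair]

lemma sum_depthArc_extend_some {x : Fin n} (hx : IsBlockMax A x) :
    ∑ α ∈ arcs (extend A (some x)), (depthArc (extend A (some x)) α : ℤ)
      = ∑ α ∈ arcs A, (depthArc A α : ℤ) + #{α ∈ arcs A | x < α.1} := by
  rw [arcs_extend_some hx, sum_insert (castSucc_last_notMem_map_castSuccPair _ x),
    depthArc_of_snd_eq_last _ rfl, sum_map]
  simp [depthArc_extend_some_castSuccPair hx, sum_add_distrib]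

lemma tIdx_extend_none : tIdx (extend A none) = tIdx A + #(arcs A) := by
  rw [tIdx, tIdx, card_arcs_extend_none, sum_depthV_extend_none, sum_depthArc_extend_none,
    sum_range_natCast_succ_sub]
  ring

lemma tIdx_extend_some {x : Fin n} (hx : IsBlockMax A x) :
    tIdx (extend A (some x)) = tIdx A + #(arcs A) + blockMaxRank A x := by
  have h_rank :
      ((x : ℕ) : ℤ) + 1 + #{α ∈ arcs A | x < α.1} = #(arcs A) + blockMaxRank A x := by
    exact_mod_cast val_add_card_arcs_gt x
  have h_Ioi : (#(Ioi x) : ℤ) + (x : ℕ) + 1 = n := by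
    have := Fin.card_Ioi x
    omega
  rw [tIdx, tIdx, card_arcs_extend_some hx, sum_depthV_extend_some hx,
    sum_depthArc_extend_some hx, sum_range_succ, sum_range_natCast_succ_sub]
  push_cast
  linear_combination h_rank - h_Ioi

end extend

lemma extend_injOn (A : SetPartition n) :
    Set.InjOn (extend A) (insertNone (blockMaxima A) : Set (Option (Fin n))) := by
  intro o ho o' ho' h
  have h_max {o : Option (Fin n)} (ho : o ∈ insertNone (blockMaxima A)) :
      ∀ x ∈ o, IsBlockMax A x :=
    fun x hx => mem_blockMaxima.1 (mem_insertNone.1 ho x hx)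
  refine Option.ext fun u => ?_
  rw [← isArc_extend_castSucc_last_iff (h_max ho), h, isArc_extend_castSucc_last_iff (h_max ho')]

lemma filter_restrict_eq_image_extend (A : SetPartition n) :
    ({P : SetPartition (n + 1) | restrict P = A} : Finset _)
      = (insertNone (blockMaxima A)).image (extend A) := by
  ext P
  simp only [mem_filter, mem_univ, true_and, mem_image, mem_insertNone, mem_blockMaxima]
  constructor
  · rintro rfl
    exact exists_extend_restrict P
  · rintro ⟨o, -, rfl⟩
    exact restrict_extend

lemma sum_filter_restrict_eq {M : Type*} [AddCommMonoid M] (A : SetPartition n)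
    (f : SetPartition (n + 1) → M) :
    ∑ P with restrict P = A, f P
      = f (extend A none) + ∑ x ∈ blockMaxima A, f (extend A (some x)) := by
  rw [filter_restrict_eq_image_extend, sum_image (extend_injOn A), sum_insertNone]

lemma tIdx_nonneg : ∀ {m : ℕ} (P : SetPartition m), 0 ≤ tIdx P
  | 0, P => by simp [tIdx, Subsingleton.elim (arcs P) ∅]
  | m + 1, P => by
    obtain ⟨o, ho, h⟩ := exists_extend_restrict P
    have := tIdx_nonneg (restrict P)
    rw [← h]
    cases o with
    | none =>
      rw [tIdx_extend_none]
      positivity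
    | some x =>
      rw [tIdx_extend_some (ho x rfl)]
      positivity

noncomputable def weight {m : ℕ} (k : ℕ) (P : SetPartition m) : ℤ[X] :=
  if #(arcs P) = k then X ^ (tIdx P).toNat else 0

lemma tpoly_eq_sum_weight (m k : ℕ) : Tpoly m k = ∑ P : SetPartition m, weight k P := by
  rw [Tpoly, sum_filter]
  rfl

lemma weight_extend_none (k : ℕ) (A : SetPartition n) :
    weight k (extend A none) = X ^ k * weight k A := by
  rw [weight, weight, card_arcs_extend_none, tIdx_extend_none]
  split_ifs with h
  · rw [← pow_add, h]
    congr 1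
    have := tIdx_nonneg A
    omega
  · rw [mul_zero]

lemma sum_weight_extend_some (k : ℕ) (A : SetPartition n) :
    ∑ x ∈ blockMaxima A, weight (k + 1) (extend A (some x))
      = (∑ i ∈ range (n - k), (X : ℤ[X]) ^ i) * X ^ (k + 1) * weight k A := by
  have h_card (x : Fin n) (hx : x ∈ blockMaxima A) :=
    card_arcs_extend_some (mem_blockMaxima.1 hx)
  by_cases h_arcs : #(arcs A) = k
  · have h_term : ∀ x ∈ blockMaxima A, weight (k + 1) (extend A (some x))
        = X ^ k * X ^ (tIdx A).toNat * X ^ blockMaxRank A x := fun x hx => by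
      have := tIdx_nonneg A
      rw [weight, if_pos (by rw [h_card x hx, h_arcs]), tIdx_extend_some (mem_blockMaxima.1 hx),
        h_arcs, ← pow_add, ← pow_add]
      congr 1
      omega
    have h_maxima : #(blockMaxima A) = n - k := by
      have := card_arcs_add_card_blockMaxima (P := A)
      omega
    have h_ranks := (blockMaxima A).sum_comp_card_filter_le fun r => (X : ℤ[X]) ^ r
    rw [sum_congr rfl h_term, ← mul_sum]
    unfold blockMaxRank
    rw [h_ranks, h_maxima, weight, if_pos h_arcs]
    simp only [pow_succ, ← sum_mul]
    ring
  · rw [weight, if_neg h_arcs, mul_zero]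
    exact sum_eq_zero fun x hx => by rw [weight, if_neg (by rw [h_card x hx]; omega)]

end DepthIndex

theorem stmt16_general (n k : ℕ) (hk1 : 1 ≤ k) :
    Tpoly (n + 1) k
      = Polynomial.X ^ k * Tpoly n k
        + (∑ i ∈ Finset.range (n + 1 - k), (Polynomial.X : Polynomial ℤ) ^ i)
            * Polynomial.X ^ k * Tpoly n (k - 1) := by
  obtain ⟨k, rfl⟩ : ∃ j, k = j + 1 := ⟨k - 1, by omega⟩
  simp only [DepthIndex.tpoly_eq_sum_weight, Nat.add_sub_add_right, Nat.add_sub_cancel,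
    Finset.mul_sum, ← Finset.sum_add_distrib]
  rw [← Finset.sum_fiberwise Finset.univ DepthIndex.restrict]
  refine Finset.sum_congr rfl fun A _ => ?_
  rw [DepthIndex.sum_filter_restrict_eq, DepthIndex.weight_extend_none,
    DepthIndex.sum_weight_extend_some]

/-- for `n ≥ 1` and `1 ≤ k ≤ n+1`,
`T_{n+1,k}(q) = q^k T_{n,k}(q) + [n+1−k]_q · q^k · T_{n,k−1}(q)`,
where `[j]_q = 1 + q + ⋯ + q^{j−1}`. -/
theorem stmt16 (n k : ℕ) (hn : 1 ≤ n) (hk1 : 1 ≤ k) (hk2 : k ≤ n + 1) :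
    Tpoly (n + 1) k
      = Polynomial.X ^ k * Tpoly n k
        + (∑ i ∈ Finset.range (n + 1 - k), (Polynomial.X : Polynomial ℤ) ^ i)
            * Polynomial.X ^ k * Tpoly n (k - 1) :=
  stmt16_general n k hk1
end

section
/- The poset of n-rooks under the Bruhat–Chevalley–Renner order is graded by the length function: if b covers a (that is, a < b and there is no rook c with a < c < b), then ℓ(b) = ℓ(a) + 1. -/
open scoped Classical

/-!
A cover is a single generating step, so `b` arises from `a` either by raising one entry,
`a i < v`, or by swapping an ascent `a i < a j` at positions `i < j`. Every violation of the
following conditions produces an explicit rook strictly between `a` and `b`: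
* when raising, every value strictly between `a i` and `v` occurs somewhere (necessarily to the
  left of `i`), and no entry to the right of `i` lies in `[a i, v)`;
* when swapping, no entry strictly between positions `i` and `j` lies in `[a i, a j]`.
In the first case the sum of entries grows by `v - a i` while exactly the `v - a i - 1`
inversions `(m, i)` with `a m ∈ (a i, v)` disappear; in the second the sum is unchanged and
`(i, j)` is the only new inversion.
-/

open Finset Function

section

variable {n : ℕ}

namespace IsRook

variable {a : Fin n → ℕ}

theorem comp_swap (ha : IsRook n a) (i j : Fin n) : IsRook n (a ∘ Equiv.swap i j) :=
  ⟨fun _ => ha.1 _, fun _ _ hx hxy => (Equiv.swap i j).injective (ha.2 _ _ hx hxy)⟩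

theorem update_of_forall_ne (ha : IsRook n a) {i : Fin n} {v : ℕ} (hv : v ≤ n)
    (hfree : ∀ m ≠ i, a m ≠ v) : IsRook n (update a i v) := by
  refine ⟨fun m => ?_, fun x y hx hxy => ?_⟩
  · rcases eq_or_ne m i with rfl | hm
    · simpa using hv
    · simpa [hm] using ha.1 m
  · rcases eq_or_ne x i with rfl | hx'
    · rcases eq_or_ne y x with rfl | hy'
      · rfl
      · simp [hy'] at hxy
        exact absurd hxy.symm (hfree y hy')
    · rcases eq_or_ne y i with rfl | hy'
      · simp [hx'] at hxy
        exact absurd hxy (hfree x hx')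
      · simp only [update_of_ne hx', update_of_ne hy'] at hx hxy
        exact ha.2 x y hx hxy

theorem apply_ne_of_update {i : Fin n} {v : ℕ} (hb : IsRook n (update a i v))
    (hv : v ≠ 0) (m : Fin n) (hm : m ≠ i) : a m ≠ v := by
  intro h
  exact hm (hb.2 m i (by simpa [hm, h]) (by simp [hm, h]))

theorem card_filter_apply_mem (ha : IsRook n a) {s : Finset ℕ} (h0 : 0 ∉ s)
    (hs : ∀ v ∈ s, ∃ m, a m = v) : #{m | a m ∈ s} = #s :=
  card_nbij a (fun m hm => (mem_filter.1 hm).2)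
    (fun x hx y _ hxy => ha.2 x y (fun h => h0 (h ▸ (mem_filter.1 hx).2)) hxy)
    (fun v hv => by obtain ⟨m, rfl⟩ := hs v hv; exact ⟨m, by simpa using hv, rfl⟩)

end IsRook

section Steps

variable {a b : Fin n → ℕ}

theorem BCRStep.ne (h : BCRStep n a b) : a ≠ b := by
  rintro rfl
  rcases h with ⟨-, -, ⟨i, hlt, -⟩ | ⟨i, j, -, h1, h2, h3, -⟩⟩ <;> omega

theorem bcrStep_update (ha : IsRook n a) {i : Fin n} {v : ℕ} (hb : IsRook n (update a i v))
    (hlt : a i < v) : BCRStep n a (update a i v) :=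
  ⟨ha, hb, .inl ⟨i, by simpa using hlt, fun _ hj => (update_of_ne hj _ _).symm⟩⟩

theorem bcrStep_comp_swap (ha : IsRook n a) {i j : Fin n} (hij : i < j) (hlt : a i < a j) :
    BCRStep n a (a ∘ Equiv.swap i j) :=
  ⟨ha, ha.comp_swap i j, .inr ⟨i, j, hij, by simp, by simp, by simpa using hlt,
    fun m hi hj => by simp [Equiv.swap_apply_of_ne_of_ne hi hj]⟩⟩

theorem BCRStep.exists_eq_update_or_eq_comp_swap (h : BCRStep n a b) :
    (∃ i v, a i < v ∧ b = update a i v) ∨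
      ∃ i j, i < j ∧ a i < a j ∧ b = a ∘ Equiv.swap i j := by
  rcases h with ⟨-, -, ⟨i, hlt, heq⟩ | ⟨i, j, hij, hbi, hbj, hlt, heq⟩⟩
  · refine .inl ⟨i, b i, hlt, funext fun m => ?_⟩
    rcases eq_or_ne m i with rfl | hm
    · simp
    · simp [hm, heq m hm]
  · refine .inr ⟨i, j, hij, by omega, funext fun m => ?_⟩
    simp only [comp_apply, Equiv.swap_apply_def]
    split_ifs with hi hj
    · rw [hi, hbi]
    · rw [hj, hbj]
    · exact (heq m hi hj).symm

end Steps

theorem Fin.eq_and_lt_or_eq_and_lt_of_swap_lt_swap {i j u v : Fin n} (hij : i < j) (huv : u < v)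
    (hrev : Equiv.swap i j v < Equiv.swap i j u) (hne : ¬(u = i ∧ v = j)) :
    (u = i ∧ i < v ∧ v < j) ∨ (v = j ∧ i < u ∧ u < j) := by
  simp only [Equiv.swap_apply_def] at hrev
  split_ifs at hrev <;> subst_vars <;> omega

theorem rookInv_comp_swap {a : Fin n → ℕ} {i j : Fin n} (hij : i < j) (hlt : a i < a j)
    (hmid : ∀ m, i < m → m < j → a m < a i ∨ a j < a m) :
    rookInv n (a ∘ Equiv.swap i j) = rookInv n a + 1 := by
  set τ := Equiv.swap i j
  -- `φ` moves a pair by `τ` exactly when `τ` keeps its order; by `hmid` it is then a bijection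
  -- from the inversions of `a` onto those of `a ∘ τ` other than `(i, j)`.
  let φ : Fin n × Fin n → Fin n × Fin n :=
    fun p => if (τ p.1 < τ p.2 ↔ p.1 < p.2) then (τ p.1, τ p.2) else p
  have hφ : Involutive φ := by
    rintro ⟨u, v⟩
    by_cases h : τ u < τ v ↔ u < v
    · simp [φ, h, τ]
    · simp [φ, h]
  set Sa := ({p | p.1 < p.2 ∧ a p.2 < a p.1} : Finset (Fin n × Fin n))
  set Sb := ({p | p.1 < p.2 ∧ a (τ p.2) < a (τ p.1)} : Finset (Fin n × Fin n))
  have hmem : ∀ p, p ∈ Sa ↔ φ p ∈ Sb.erase (i, j) := by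
    rintro ⟨u, v⟩
    by_cases h : τ u < τ v ↔ u < v
    · simp only [Sa, Sb, φ, h, if_true, mem_filter, mem_univ, true_and, mem_erase, ne_eq,
        Prod.mk.injEq, τ, Equiv.swap_apply_self, Equiv.swap_apply_eq_iff, Equiv.swap_apply_left,
        Equiv.swap_apply_right]
      omega
    simp only [Sa, Sb, φ, h, if_false, mem_filter, mem_univ, true_and, mem_erase, ne_eq,
      Prod.mk.injEq]
    by_cases huv : u < v
    swap
    · simp [huv]
    have hrev : τ v < τ u :=
      lt_of_le_of_ne (not_lt.1 fun h' => h (iff_of_true h' huv)) (τ.injective.ne huv.ne')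
    by_cases hij' : u = i ∧ v = j
    · obtain ⟨rfl, rfl⟩ := hij'
      simp [hlt.not_gt]
    rcases Fin.eq_and_lt_or_eq_and_lt_of_swap_lt_swap hij huv hrev hij' with
      ⟨rfl, hiv, hvj⟩ | ⟨rfl, hiu, huj⟩
    · rw [Equiv.swap_apply_left, Equiv.swap_apply_of_ne_of_ne hiv.ne' hvj.ne]
      have := hmid v hiv hvj
      omega
    · rw [Equiv.swap_apply_right, Equiv.swap_apply_of_ne_of_ne hiu.ne' huj.ne]
      have := hmid u hiu huj
      omega
  have hSb : (i, j) ∈ Sb := by simp [Sb, τ, hij, hlt]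
  change #Sb = #Sa + 1
  rw [← card_erase_add_one hSb, card_equiv hφ.toPerm hmem]

theorem rookInv_update {a : Fin n → ℕ} {i : Fin n} {v : ℕ} (hle : a i ≤ v)
    (hfree : ∀ m ≠ i, a m ≠ v) (hafter : ∀ m, i < m → a m < a i ∨ v ≤ a m) :
    rookInv n a = rookInv n (update a i v) + #{m | a m ∈ Ioo (a i) v} := by
  have hsplit : ∀ p : Fin n × Fin n, (p.1 < p.2 ∧ a p.2 < a p.1) ↔
      (p.1 < p.2 ∧ update a i v p.2 < update a i v p.1) ∨
        (p.2 = i ∧ a p.1 ∈ Ioo (a i) v) := by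
    rintro ⟨x, y⟩
    simp only [update_apply, mem_Ioo]
    by_cases hx : x = i <;> by_cases hy : y = i
    · subst_vars; simp
    · subst hx
      simp only [if_true, hy, if_false, false_and, or_false, and_congr_right_iff]
      intro hxy
      have := hafter y hxy
      omega
    · subst hy
      have := hfree x hx
      simp only [if_true, hx, if_false, true_and]
      rcases lt_or_gt_of_ne hx with hxy | hxy
      · simp only [hxy, true_and]
        omega
      · have := hafter x hxy
        simp only [hxy.not_gt, false_and, false_or, false_iff, not_and, not_lt]
        omega
    · simp [hx, hy]
  have hdisj : ∀ p : Fin n × Fin n, (p.1 < p.2 ∧ update a i v p.2 < update a i v p.1) →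
      ¬(p.2 = i ∧ a p.1 ∈ Ioo (a i) v) := by
    rintro ⟨x, y⟩ ⟨hxy, h⟩ ⟨rfl, hx⟩
    rw [update_self, update_of_ne hxy.ne] at h
    exact (mem_Ioo.1 hx).2.not_gt h
  have hcount : #{m | a m ∈ Ioo (a i) v} =
      #({p | p.2 = i ∧ a p.1 ∈ Ioo (a i) v} : Finset (Fin n × Fin n)) :=
    card_nbij' (fun m => (m, i)) Prod.fst (by intro m; simp) (by intro p; simp)
      (by intro m; simp) (by rintro ⟨x, y⟩ h; simp_all)
  rw [rookInv, rookInv, filter_congr fun p _ => hsplit p, filter_or, hcount,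
    card_union_of_disjoint (disjoint_filter.2 fun p _ => hdisj p)]

def NoRookStrictlyBetween (n : ℕ) (a b : Fin n → ℕ) : Prop :=
  ∀ c : Fin n → ℕ, IsRook n c → BCRle n a c → BCRle n c b → c = a ∨ c = b

namespace NoRookStrictlyBetween

variable {a : Fin n → ℕ}

theorem bcrStep {b : Fin n → ℕ} (hcov : NoRookStrictlyBetween n a b) (hab : BCRle n a b)
    (hne : a ≠ b) : BCRStep n a b := by
  rcases hab.cases_head with rfl | ⟨c, hac, hcb⟩
  · exact absurd rfl hne
  · rcases hcov c hac.2.1 (.single hac) hcb with rfl | rfl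
    · exact absurd rfl hac.ne
    · exact hac

theorem false_of_ne {b c : Fin n → ℕ} (hcov : NoRookStrictlyBetween n a b) (hc : IsRook n c)
    (hac : BCRle n a c) (hcb : BCRle n c b) (hca : c ≠ a) (hcb' : c ≠ b) : False :=
  (hcov c hc hac hcb).elim hca hcb'

section Update

variable {i m : Fin n} {v : ℕ}

theorem update_apply_notMem_Ioo (hcov : NoRookStrictlyBetween n a (update a i v))
    (ha : IsRook n a) (hb : IsRook n (update a i v)) (him : i < m) : a m ∉ Ioo (a i) v := by
  rw [mem_Ioo]
  rintro ⟨hlo, hhi⟩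
  set c := a ∘ Equiv.swap i m
  have hc : IsRook n c := ha.comp_swap i m
  have hc' : IsRook n (update c i v) :=
    hc.update_of_forall_ne (by simpa using hb.1 i) fun x hx => by
      rcases eq_or_ne x m with rfl | hxm
      · simp [c]; omega
      · simpa [c, Equiv.swap_apply_of_ne_of_ne hx hxm] using
          hb.apply_ne_of_update (by omega) x hx
  have s1 : BCRStep n a c := bcrStep_comp_swap ha him hlo
  have s2 : BCRStep n c (update c i v) := bcrStep_update hc hc' (by simpa [c] using hhi)
  have s3 : BCRStep n (update c i v) (update a i v) := ⟨hc', hb, .inl ⟨m, by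
    simpa [c, him.ne'] using hlo, fun x hx => by
    rcases eq_or_ne x i with rfl | hxi
    · simp
    · simp [c, hxi, Equiv.swap_apply_of_ne_of_ne hxi hx]⟩⟩
  exact hcov.false_of_ne hc (.single s1) ((Relation.ReflTransGen.single s2).tail s3)
    (ne_of_apply_ne (· i) (by simp [c]; omega)) (ne_of_apply_ne (· i) (by simp [c]; omega))

theorem update_apply_ne (hcov : NoRookStrictlyBetween n a (update a i v)) (ha : IsRook n a)
    (hb : IsRook n (update a i v)) (hlt : a i < v) (him : i < m) : a m ≠ a i := by
  intro heq
  set c := update a m v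
  have hc : IsRook n c :=
    ha.update_of_forall_ne (by simpa using hb.1 i) fun x hx => by
      rcases eq_or_ne x i with rfl | hxi
      · omega
      · exact hb.apply_ne_of_update (by omega) x hxi
  have s1 : BCRStep n a c := bcrStep_update ha hc (by omega)
  have hcb : c ∘ Equiv.swap i m = update a i v := by
    funext x
    simp only [c, comp_apply, update_apply, Equiv.swap_apply_def]
    split_ifs <;> subst_vars <;> first | rfl | omega
  have s2 : BCRStep n c (update a i v) :=
    hcb ▸ bcrStep_comp_swap hc him (by simp [c, him.ne]; omega)
  exact hcov.false_of_ne hc (.single s1) (.single s2)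
    (ne_of_apply_ne (· m) (by simp [c]; omega))
    (ne_of_apply_ne (· i) (by simp [c, him.ne]; omega))

theorem update_lt_or_le (hcov : NoRookStrictlyBetween n a (update a i v)) (ha : IsRook n a)
    (hb : IsRook n (update a i v)) (hlt : a i < v) (m : Fin n) (him : i < m) :
    a m < a i ∨ v ≤ a m := by
  have h1 := hcov.update_apply_notMem_Ioo ha hb him
  have h2 := hcov.update_apply_ne ha hb hlt him
  have h3 := hb.apply_ne_of_update (by omega) m him.ne'
  rw [mem_Ioo] at h1
  omega

theorem update_exists_eq (hcov : NoRookStrictlyBetween n a (update a i v)) (ha : IsRook n a)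
    (hb : IsRook n (update a i v)) (w : ℕ) (hw : w ∈ Ioo (a i) v) : ∃ m, a m = w := by
  rw [mem_Ioo] at hw
  by_contra! hfree
  set c := update a i w
  have hc : IsRook n c :=
    ha.update_of_forall_ne (hw.2.trans_le (by simpa using hb.1 i)).le fun m _ => hfree m
  have s1 : BCRStep n a c := bcrStep_update ha hc hw.1
  have s2 : BCRStep n c (update a i v) := by
    simpa [c] using bcrStep_update hc (i := i) (v := v) (by simpa [c] using hb)
      (by simpa [c] using hw.2)
  exact hcov.false_of_ne hc (.single s1) (.single s2)
    (ne_of_apply_ne (· i) (by simp [c]; omega)) (ne_of_apply_ne (· i) (by simp [c]; omega))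

end Update

section Swap

variable {i j m : Fin n}

theorem comp_swap_apply_notMem_Ioo (hcov : NoRookStrictlyBetween n a (a ∘ Equiv.swap i j))
    (ha : IsRook n a) (him : i < m) (hmj : m < j) : a m ∉ Ioo (a i) (a j) := by
  rw [mem_Ioo]
  rintro ⟨hlo, hhi⟩
  have hij := him.trans hmj
  set c := a ∘ Equiv.swap i m
  set d := c ∘ Equiv.swap m j
  have s1 : BCRStep n a c := bcrStep_comp_swap ha him hlo
  have s2 : BCRStep n c d := bcrStep_comp_swap (ha.comp_swap i m) hmj (by
    simpa [Equiv.swap_apply_of_ne_of_ne hij.ne' hmj.ne'] using hlo.trans hhi)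
  have hdb : d ∘ Equiv.swap i m = a ∘ Equiv.swap i j := by
    funext x
    simp only [c, d, comp_apply, Equiv.swap_apply_def]
    split_ifs <;> subst_vars <;> first | rfl | omega
  have s3 : BCRStep n d (a ∘ Equiv.swap i j) := hdb ▸ bcrStep_comp_swap
    ((ha.comp_swap i m).comp_swap m j) him (by
      simpa [Equiv.swap_apply_of_ne_of_ne him.ne hij.ne,
        Equiv.swap_apply_of_ne_of_ne hij.ne' hmj.ne'])
  exact hcov.false_of_ne (ha.comp_swap i m) (.single s1)
    ((Relation.ReflTransGen.single s2).tail s3)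
    (ne_of_apply_ne (· i) (by simp; omega)) (ne_of_apply_ne (· i) (by simp; omega))

theorem comp_swap_apply_ne (hcov : NoRookStrictlyBetween n a (a ∘ Equiv.swap i j))
    (ha : IsRook n a) (hlt : a i < a j) (him : i < m) (hmj : m < j) : a m ≠ a i := by
  intro heq
  have hij := him.trans hmj
  set c := a ∘ Equiv.swap m j
  have s1 : BCRStep n a c := bcrStep_comp_swap ha hmj (by omega)
  have hcb : c ∘ Equiv.swap i m = a ∘ Equiv.swap i j := by
    funext x
    simp only [c, comp_apply, Equiv.swap_apply_def]
    split_ifs <;> subst_vars <;> first | rfl | omega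
  have s2 : BCRStep n c (a ∘ Equiv.swap i j) := hcb ▸ bcrStep_comp_swap (ha.comp_swap m j) him
    (by simpa [Equiv.swap_apply_of_ne_of_ne him.ne hij.ne])
  exact hcov.false_of_ne (ha.comp_swap m j) (.single s1) (.single s2)
    (ne_of_apply_ne (· m) (by simp; omega))
    (ne_of_apply_ne (· i) (by simp [Equiv.swap_apply_of_ne_of_ne him.ne hij.ne]; omega))

theorem comp_swap_lt_or_lt (hcov : NoRookStrictlyBetween n a (a ∘ Equiv.swap i j))
    (ha : IsRook n a) (hlt : a i < a j) (m : Fin n) (him : i < m) (hmj : m < j) :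
    a m < a i ∨ a j < a m := by
  have h1 := hcov.comp_swap_apply_notMem_Ioo ha him hmj
  have h2 := hcov.comp_swap_apply_ne ha hlt him hmj
  have h3 : a m ≠ a j := fun h => hmj.ne (ha.2 m j (by omega) h)
  rw [mem_Ioo] at h1
  omega

end Swap

end NoRookStrictlyBetween

theorem rookLen_update_of_noRookStrictlyBetween {a : Fin n → ℕ} {i : Fin n} {v : ℕ}
    (ha : IsRook n a) (hb : IsRook n (update a i v)) (hlt : a i < v)
    (hcov : NoRookStrictlyBetween n a (update a i v)) :
    rookLen n (update a i v) = rookLen n a + 1 := by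
  have hinv := rookInv_update hlt.le (hb.apply_ne_of_update (by omega))
    (hcov.update_lt_or_le ha hb hlt)
  rw [ha.card_filter_apply_mem (by simp) (hcov.update_exists_eq ha hb), Nat.card_Ioo] at hinv
  have hsum : ∑ m, update a i v m + a i = ∑ m, a m + v := by
    rw [sum_update_of_mem (mem_univ i), sum_eq_add_sum_sdiff_singleton_of_mem (mem_univ i)]
    ring
  rw [rookLen, rookLen]
  omega

theorem rookLen_comp_swap_of_noRookStrictlyBetween {a : Fin n → ℕ} {i j : Fin n}
    (ha : IsRook n a) (hij : i < j) (hlt : a i < a j)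
    (hcov : NoRookStrictlyBetween n a (a ∘ Equiv.swap i j)) :
    rookLen n (a ∘ Equiv.swap i j) = rookLen n a + 1 := by
  rw [rookLen, rookLen, rookInv_comp_swap hij hlt (hcov.comp_swap_lt_or_lt ha hlt)]
  simp only [comp_apply, Equiv.sum_comp]
  ring

end

/-- the poset of `n`-rooks under the Bruhat–Chevalley–Renner
order is graded by the length function `ℓ`: if `b` covers `a` (i.e. `a ≤ b`,
`a ≠ b`, and no rook lies strictly between them), then `ℓ(b) = ℓ(a) + 1`. -/
theorem stmt17 (n : ℕ) (a b : Fin n → ℕ) (ha : IsRook n a) (hb : IsRook n b)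
    (hab : BCRle n a b) (hne : a ≠ b)
    (hcov : ∀ c : Fin n → ℕ, IsRook n c → BCRle n a c → BCRle n c b →
      c = a ∨ c = b) :
    rookLen n b = rookLen n a + 1 := by
  rcases (NoRookStrictlyBetween.bcrStep hcov hab hne).exists_eq_update_or_eq_comp_swap with
    ⟨i, v, hlt, rfl⟩ | ⟨i, j, hij, hlt, rfl⟩
  · exact rookLen_update_of_noRookStrictlyBetween ha hb hlt hcov
  · exact rookLen_comp_swap_of_noRookStrictlyBetween ha hij hlt hcov
end

section
/- Let x and y be n-rooks and let i < j be indices such that y(i) = x(j), y(j) = x(i), y(j) < y(i), and x(m) = y(m) for all m ∉ {i,j}. Then ℓ(y) = ℓ(x) + 1 if and only if for every s with i < s < j, either x(s) > x(j) or x(s) < x(i). -/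
open scoped Classical

/-!
Write `y = x ∘ swap i j` with `x i < x j`. The sum of the entries does not change, and only
pairs of positions meeting `{i, j}` can change their inversion status. The pair `(i, j)` becomes
an inversion; for `s < i` or `s > j` the two pairs joining `s` to `i` and `j` trade their
inversions with each other; for `i < s < j` the pairs `(i, s)` and `(s, j)` gain one inversion
for each of `x i ≤ x s ≤ x j` and `x i < x s < x j`. Hence `ℓ(y) = ℓ(x) + 1` exactly when no
`x s` with `i < s < j` lies in `[x i, x j]`.
-/

open Finset Equiv

theorem Finset.sum_prod_eq_of_eq_zero_off {ι M : Type*} [Fintype ι] [DecidableEq ι]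
    [AddCommMonoid M] (δ : ι × ι → M) (S : Finset ι) (h : ∀ s ∉ S, ∀ t ∉ S, δ (s, t) = 0) :
    ∑ p, δ p = ∑ s ∈ S, ∑ t ∈ S, δ (s, t) + ∑ s ∈ Sᶜ, ∑ t ∈ S, (δ (s, t) + δ (t, s)) := by
  have hcompl : ∀ s ∈ Sᶜ, ∑ t ∈ Sᶜ, δ (s, t) = 0 := fun s hs =>
    sum_eq_zero fun t ht => h s (mem_compl.1 hs) t (mem_compl.1 ht)
  rw [Fintype.sum_prod_type, sum_congr rfl fun s _ => (sum_add_sum_compl S fun t => δ (s, t)).symm,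
    sum_add_distrib, ← sum_add_sum_compl S fun s => ∑ t ∈ S, δ (s, t),
    ← sum_add_sum_compl S fun s => ∑ t ∈ Sᶜ, δ (s, t), sum_congr rfl hcompl, sum_const_zero,
    sum_comm (s := S) (t := Sᶜ)]
  simp only [add_zero, sum_add_distrib]
  abel

variable {n : ℕ}

def invIndicator (f : Fin n → ℕ) (p : Fin n × Fin n) : ℤ :=
  if p.1 < p.2 ∧ f p.2 < f p.1 then 1 else 0

theorem rookInv_eq_sum_invIndicator (f : Fin n → ℕ) :
    (rookInv n f : ℤ) = ∑ p, invIndicator f p := by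
  rw [rookInv, card_filter]
  push_cast
  rfl

section Swap

variable (f : Fin n → ℕ) {i j : Fin n}

theorem invIndicator_comp_swap_of_notMem {s t : Fin n} (hs : s ∉ ({i, j} : Finset (Fin n)))
    (ht : t ∉ ({i, j} : Finset (Fin n))) :
    invIndicator (f ∘ swap i j) (s, t) = invIndicator f (s, t) := by
  simp only [mem_insert, mem_singleton, not_or] at hs ht
  simp [invIndicator, swap_apply_of_ne_of_ne hs.1 hs.2, swap_apply_of_ne_of_ne ht.1 ht.2]

theorem sum_pair_invIndicator_comp_swap_sub (hij : i < j) (hf : f i < f j) :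
    ∑ s ∈ {i, j}, ∑ t ∈ {i, j},
      (invIndicator (f ∘ swap i j) (s, t) - invIndicator f (s, t)) = 1 := by
  simp only [sum_pair hij.ne, invIndicator, Function.comp, swap_apply_left, swap_apply_right]
  split_ifs <;> omega

theorem sum_pair_invIndicator_comp_swap_sub_of_notMem (hij : i < j) (hf : f i < f j) {s : Fin n}
    (hs : s ∉ ({i, j} : Finset (Fin n))) :
    ∑ t ∈ {i, j}, ((invIndicator (f ∘ swap i j) (s, t) - invIndicator f (s, t)) +
        (invIndicator (f ∘ swap i j) (t, s) - invIndicator f (t, s))) =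
      if s ∈ Ioo i j then
        (if f i ≤ f s ∧ f s ≤ f j then 1 else 0) + (if f i < f s ∧ f s < f j then 1 else 0)
      else 0 := by
  simp only [mem_insert, mem_singleton, not_or] at hs
  simp only [sum_pair hij.ne, invIndicator, Function.comp, swap_apply_left, swap_apply_right,
    swap_apply_of_ne_of_ne hs.1 hs.2, mem_Ioo]
  rcases lt_or_gt_of_ne hs.1 with hsi | his
  · simp only [hsi, hsi.trans hij, hsi.not_gt, (hsi.trans hij).not_gt, false_and, true_and,
      ↓reduceIte]
    split_ifs <;> omega
  rcases lt_or_gt_of_ne hs.2 with hsj | hjs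
  · simp only [his, hsj, his.not_gt, hsj.not_gt, false_and, true_and, ↓reduceIte]
    split_ifs <;> omega
  · simp only [his, hjs, his.not_gt, hjs.not_gt, false_and, true_and, ↓reduceIte]
    split_ifs <;> omega

theorem rookInv_comp_swap_s19 (hij : i < j) (hf : f i < f j) :
    rookInv n (f ∘ swap i j) = rookInv n f + 1 + #{s ∈ Ioo i j | f i ≤ f s ∧ f s ≤ f j} +
      #{s ∈ Ioo i j | f i < f s ∧ f s < f j} := by
  have hIoo : Ioo i j ⊆ {i, j}ᶜ := fun s hs => by
    rw [mem_Ioo] at hs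
    simp [hs.1.ne', hs.2.ne]
  have key : (rookInv n (f ∘ swap i j) : ℤ) - rookInv n f = 1 + ∑ s ∈ Ioo i j,
      ((if f i ≤ f s ∧ f s ≤ f j then 1 else 0) + (if f i < f s ∧ f s < f j then 1 else 0)) := by
    rw [rookInv_eq_sum_invIndicator, rookInv_eq_sum_invIndicator, ← sum_sub_distrib,
      sum_prod_eq_of_eq_zero_off _ {i, j} fun s hs t ht => by
        rw [invIndicator_comp_swap_of_notMem f hs ht, sub_self],
      sum_pair_invIndicator_comp_swap_sub f hij hf,
      sum_congr rfl fun s hs =>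
        sum_pair_invIndicator_comp_swap_sub_of_notMem f hij hf (mem_compl.1 hs),
      sum_ite_mem, inter_eq_right.2 hIoo]
  rw [sum_add_distrib] at key
  rw [← Nat.cast_inj (R := ℤ)]
  push_cast [card_filter]
  linarith

theorem rookLen_comp_swap (hij : i < j) (hf : f i < f j) :
    rookLen n (f ∘ swap i j) = rookLen n f + 1 + #{s ∈ Ioo i j | f i ≤ f s ∧ f s ≤ f j} +
      #{s ∈ Ioo i j | f i < f s ∧ f s < f j} := by
  simp only [rookLen, rookInv_comp_swap_s19 f hij hf, Function.comp_apply, Equiv.sum_comp]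
  ring

end Swap

theorem stmt19_general (n : ℕ) (x y : Fin n → ℕ)
    (i j : Fin n) (hij : i < j)
    (h1 : y i = x j) (h2 : y j = x i) (h3 : y j < y i)
    (heq : ∀ m : Fin n, m ≠ i → m ≠ j → x m = y m) :
    rookLen n y = rookLen n x + 1 ↔
      ∀ s : Fin n, i < s → s < j → (x j < x s ∨ x s < x i) := by
  have hy : y = x ∘ swap i j := by
    funext m
    rcases eq_or_ne m i with rfl | hmi
    · simp [h1]
    rcases eq_or_ne m j with rfl | hmj
    · simp [h2]
    simp [swap_apply_of_ne_of_ne hmi hmj, heq m hmi hmj]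
  have hx : x i < x j := h1 ▸ h2 ▸ h3
  subst hy
  rw [rookLen_comp_swap x hij hx, add_assoc, add_eq_left, add_eq_zero, card_eq_zero, card_eq_zero,
    filter_eq_empty_iff, filter_eq_empty_iff, ← forall_and]
  refine forall_congr' fun s => ?_
  rw [mem_Ioo]
  omega

/-- let `x`, `y` be `n`-rooks and `i < j` indices with
`y(i) = x(j)`, `y(j) = x(i)`, `y(j) < y(i)`, and `x(m) = y(m)` for `m ∉ {i,j}`.
Then `ℓ(y) = ℓ(x) + 1` iff for every `s` with `i < s < j`, either
`x(s) > x(j)` or `x(s) < x(i)`. -/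
theorem stmt19 (n : ℕ) (x y : Fin n → ℕ) (hx : IsRook n x) (hy : IsRook n y)
    (i j : Fin n) (hij : i < j)
    (h1 : y i = x j) (h2 : y j = x i) (h3 : y j < y i)
    (heq : ∀ m : Fin n, m ≠ i → m ≠ j → x m = y m) :
    rookLen n y = rookLen n x + 1 ↔
      ∀ s : Fin n, i < s → s < j → (x j < x s ∨ x s < x i) :=
  stmt19_general n x y i j hij h1 h2 h3 heq
end
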